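/- arXiv:2108.07424 — 8 statements merged into one kernel-verified Lean document; each statement's English description precedes it below -/
import Mathlib

section
/- A choice function C on a finite set X is CBR-representable if and only if C satisfies NC, WCC*, NBC*, and R-WARP. -/
/-- A rationale is an asymmetric binary relation. -/
def Asym {X : Type*} (R : X → X → Prop) : Prop := ∀ a b, R a b → ¬ R b a

/-- Transitivity of a relation. -/
def Tran {X : Type*} (R : X → X → Prop) : Prop := ∀ a b c, R a b → R b c → R a c

/-- Completeness of a relation: any two distinct elements are related one way or the other. -/
def Comp {X : Type*} (R : X → X → Prop) : Prop := ∀ a b : X, a ≠ b → R a b ∨ R b a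

/-- `x ∈ min(S, R)`: some element of `S` dominates `x` and `x` dominates no element of `S`. -/
def MinSet {X : Type*} (R : X → X → Prop) (S : Finset X) (x : X) : Prop :=
  x ∈ S ∧ (∃ z ∈ S, R z x) ∧ ∀ z ∈ S, ¬ R x z

/-- `x ∈ max(S, R)`: no element of `S` dominates `x`. -/
def MaxSet {X : Type*} (R : X → X → Prop) (S : Finset X) (x : X) : Prop :=
  x ∈ S ∧ ∀ z ∈ S, ¬ R z x

/-- `x ∈ S \ min(S, R)`: `x` survives the first-stage rejection. -/
def Short {X : Type*} (R : X → X → Prop) (S : Finset X) (x : X) : Prop :=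
  x ∈ S ∧ ¬ MinSet R S x

/-- `C` is a choice function: on every nonempty menu it picks an element of the menu. -/
def IsChoice {X : Type*} (C : Finset X → X) : Prop :=
  ∀ S : Finset X, S.Nonempty → C S ∈ S

/-- `(R, P)` is a CBR representation of `C`: `R` is a transitive rationale, `P` a complete
rationale, and for every nonempty menu `S`, `C S` is the unique element of
`max(S \ min(S,R), P)`. -/
def CBR {X : Type*} (C : Finset X → X) (R P : X → X → Prop) : Prop :=
  Asym R ∧ Tran R ∧ Asym P ∧ Comp P ∧
    ∀ S : Finset X, S.Nonempty →
      ∀ x : X, (Short R S x ∧ ∀ z : X, Short R S z → ¬ P z x) ↔ x = C S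

/-- The pairwise revealed relation `x ≻_c y`. -/
def pc {X : Type*} [DecidableEq X] (C : Finset X → X) (x y : X) : Prop :=
  x ≠ y ∧ C {x, y} = x

/-- `C` displays an `(x y)` reversal due to `z` on the menu `S`. -/
def Rev {X : Type*} [DecidableEq X] (C : Finset X → X) (x y z : X) (S : Finset X) : Prop :=
  x ≠ y ∧ x ∈ S ∧ y ∈ S ∧ z ∉ S ∧ C {x, y} = x ∧ C S = x ∧ C (insert z S) = y

/-- A weak `(x y)` reversal due to `z` on `S`: additionally `x ≻_c z`. -/
def WeakRev {X : Type*} [DecidableEq X] (C : Finset X → X) (x y z : X) (S : Finset X) : Prop :=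
  Rev C x y z S ∧ pc C x z

/-- A strong `(x y)` reversal due to `z` on `S`: additionally `z ≻_c x`. -/
def StrongRev {X : Type*} [DecidableEq X] (C : Finset X → X) (x y z : X) (S : Finset X) : Prop :=
  Rev C x y z S ∧ pc C z x

/-- The revealed first-stage relation `x ≻_R y`. -/
def RRel {X : Type*} [DecidableEq X] (C : Finset X → X) (x y : X) : Prop :=
  (∃ w S, WeakRev C x y w S) ∨ (∃ w S, WeakRev C w x y S) ∨ (∃ w S, StrongRev C y w x S)

/-- The transitive closure `≻̄_R` of `≻_R`. -/
def RBar {X : Type*} [DecidableEq X] (C : Finset X → X) : X → X → Prop :=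
  Relation.TransGen (RRel C)

/-- Axiom NC (Never Chosen). -/
def NC {X : Type*} [DecidableEq X] (C : Finset X → X) : Prop :=
  ∀ S : Finset X, ∀ x ∈ S, (∃ y ∈ S, y ≠ x) →
    (∀ y ∈ S, y ≠ x → C {x, y} ≠ x) → C S ≠ x

/-- Axiom WCC* (Weak Contraction Consistency*). -/
def WCCstar {X : Type*} [DecidableEq X] (C : Finset X → X) : Prop :=
  ∀ (x y : X) (S : Finset X), x ≠ y → {x, y} ⊂ S → (C S = x ∨ C S = y) →
    ∃ z ∈ S, z ≠ x ∧ z ≠ y ∧ (C (S.erase z) = x ∨ C (S.erase z) = y)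

/-- Axiom NBC* (No Binary Cycles*): any `≻_R`-chain from `x₁` to `xₙ` yields `x₁ ≻_c xₙ`. -/
def NBCstar {X : Type*} [DecidableEq X] (C : Finset X → X) : Prop :=
  ∀ x y : X, RBar C x y → pc C x y

/-- Axiom R-WARP (Reject-WARP). -/
def RWARP {X : Type*} [DecidableEq X] (C : Finset X → X) : Prop :=
  ∀ (x y : X) (S S' : Finset X), x ≠ y →
    x ∈ S → y ∈ S → x ∈ S' → y ∈ S' →
    ¬ MinSet (RBar C) S y → C S = x → ¬ MinSet (RBar C) S' x → C S' ≠ y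

set_option linter.unusedVariables false
set_option linter.unusedSectionVars false

-- ===================== auxiliary lemmas =====================
open Finset

section Aux
variable {X : Type*} [DecidableEq X] {C : Finset X → X}

lemma mem_pair' {a x y : X} : a ∈ ({x, y} : Finset X) ↔ a = x ∨ a = y := by
  simp [Finset.mem_insert, Finset.mem_singleton]

lemma pair_nonempty (x y : X) : ({x, y} : Finset X).Nonempty :=
  ⟨x, by simp⟩

lemma pc_or (hC : IsChoice C) {x y : X} (h : x ≠ y) : pc C x y ∨ pc C y x := by
  have := hC {x, y} (pair_nonempty x y)
  rcases mem_pair'.1 this with h1 | h1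
  · exact Or.inl ⟨h, h1⟩
  · exact Or.inr ⟨h.symm, by rwa [Finset.pair_comm]⟩

lemma pc_asymm {x y : X} (h1 : pc C x y) (h2 : pc C y x) : False := by
  have := h1.2
  rw [Finset.pair_comm] at this
  exact h1.1 (this.symm.trans h2.2)

lemma pc_irrefl {x : X} (h : pc C x x) : False := h.1 rfl

lemma rbar_irrefl (hN : NBCstar C) {x : X} (h : RBar C x x) : False :=
  pc_irrefl (hN x x h)

lemma rbar_asymm (hN : NBCstar C) {x y : X} (h1 : RBar C x y) (h2 : RBar C y x) : False :=
  pc_asymm (hN x y h1) (hN y x h2)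

/-- Lemma G: a chain/flip lemma from WCC*. -/
lemma lemG (hC : IsChoice C) (hW : WCCstar C) :
    ∀ (n : ℕ) (T : Finset X) (a b : X), T.card ≤ n → a ∈ T → b ∈ T → a ≠ b →
      C T = a → C {b, a} = b →
      ∃ u T', Rev C b a u T' ∧ T' ⊆ T ∧ u ∈ T := by
  intro n
  induction n with
  | zero =>
    intro T a b hcard haT _ _ _ _
    simp only [Nat.le_zero, Finset.card_eq_zero] at hcard
    subst hcard; exact absurd haT (Finset.notMem_empty a)
  | succ n ih =>
    intro T a b hcard haT hbT hab hCT hpair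
    have hsub : ({b, a} : Finset X) ⊆ T := by
      intro t ht; rcases mem_pair'.1 ht with rfl | rfl <;> assumption
    have hss : ({b, a} : Finset X) ⊂ T := by
      refine ⟨hsub, fun h => ?_⟩
      have : C T = b := by
        have : T = ({b, a} : Finset X) := le_antisymm h hsub
        rw [this]; exact hpair
      exact hab (hCT.symm.trans this)
    obtain ⟨z, hzT, hzb, hza, hch⟩ := hW b a T (Ne.symm hab) hss (Or.inr hCT)
    rcases hch with hcb | hca
    · refine ⟨z, T.erase z, ?_, Finset.erase_subset _ _, hzT⟩
      refine ⟨Ne.symm hab, Finset.mem_erase.2 ⟨Ne.symm hzb, hbT⟩, Finset.mem_erase.2 ⟨?_, haT⟩,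
        Finset.notMem_erase _ _, hpair, hcb, ?_⟩
      · exact fun h => hza h.symm  -- a ≠ z needed: mem_erase needs a ≠ z
      · rw [Finset.insert_erase hzT]; exact hCT
    · have hcard' : (T.erase z).card ≤ n := by
        have := Finset.card_erase_lt_of_mem hzT
        omega
      obtain ⟨u, T', h1, h2, h3⟩ := ih (T.erase z) a b hcard'
        (Finset.mem_erase.2 ⟨fun h => hza h.symm, haT⟩)
        (Finset.mem_erase.2 ⟨fun h => hzb h.symm, hbT⟩) hab hca hpair
      exact ⟨u, T', h1, h2.trans (Finset.erase_subset _ _), Finset.erase_subset _ _ h3⟩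

end Aux

section Suff
open Finset
variable {X : Type*} [Fintype X] [DecidableEq X] {C : Finset X → X}

open scoped Classical in
/-- Lemma L: if `C S = x` while `z ∈ S` beats `x` pairwise and `z ≻̄ x`, then `x ≻̄`-dominates
some element of `S`. -/
lemma lemL (hC : IsChoice C) (hW : WCCstar C) (hN : NBCstar C) :
    ∀ (n : ℕ) (z x : X) (S : Finset X),
      (Finset.univ.filter (fun s => RBar C s z)).card ≤ n →
      C S = x → z ∈ S → x ∈ S → pc C z x → RBar C z x →
      ∃ w ∈ S, RBar C x w := by
  classical
  intro n
  induction n with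
  | zero =>
    intro z x S hcard hCS hzS hxS hpc hzx
    -- run one step of the argument; the strong branch contradicts the measure bound
    obtain ⟨u, T', hrev, hsub, huS⟩ :=
      lemG hC hW S.card S x z le_rfl hxS hzS (fun h => hpc.1 h.symm) hCS hpc.2
    have huz : u ≠ z := fun h => hrev.2.2.2.1 (h ▸ hrev.2.1)
    rcases pc_or hC huz with hpcu | hpcz
    · -- strong reversal: RBar C u z, so the filter is nonempty, contradiction
      exfalso
      have hrb : RBar C u z :=
        Relation.TransGen.single (Or.inr (Or.inr ⟨x, T', hrev, hpcu⟩))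
      have : u ∈ Finset.univ.filter (fun s => RBar C s z) :=
        Finset.mem_filter.2 ⟨Finset.mem_univ u, hrb⟩
      have := Finset.card_pos.2 ⟨u, this⟩
      omega
    · -- weak reversal: RRel C x u
      exact ⟨u, huS, Relation.TransGen.single (Or.inr (Or.inl ⟨z, T', hrev, hpcz⟩))⟩
  | succ n ih =>
    intro z x S hcard hCS hzS hxS hpc hzx
    obtain ⟨u, T', hrev, hsub, huS⟩ :=
      lemG hC hW S.card S x z le_rfl hxS hzS (fun h => hpc.1 h.symm) hCS hpc.2
    have huz : u ≠ z := fun h => hrev.2.2.2.1 (h ▸ hrev.2.1)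
    rcases pc_or hC huz with hpcu | hpcz
    · -- strong branch: new challenger u with smaller measure
      have hruz : RBar C u z :=
        Relation.TransGen.single (Or.inr (Or.inr ⟨x, T', hrev, hpcu⟩))
      have hrux : RBar C u x := hruz.trans hzx
      have hmeas : (Finset.univ.filter (fun s => RBar C s u)).card ≤ n := by
        have hss : (Finset.univ.filter (fun s => RBar C s u)) ⊂
            (Finset.univ.filter (fun s => RBar C s z)) := by
          refine Finset.ssubset_iff_of_subset ?_ |>.2 ?_
          · intro s hs
            have := (Finset.mem_filter.1 hs).2
            exact Finset.mem_filter.2 ⟨Finset.mem_univ s, this.trans hruz⟩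
          · refine ⟨u, Finset.mem_filter.2 ⟨Finset.mem_univ u, hruz⟩, fun h => ?_⟩
            exact rbar_irrefl hN (Finset.mem_filter.1 h).2
        have := Finset.card_lt_card hss
        omega
      exact ih u x S hmeas hCS huS hxS (hN u x hrux) hrux
    · exact ⟨u, huS, Relation.TransGen.single (Or.inr (Or.inl ⟨z, T', hrev, hpcz⟩))⟩

open scoped Classical in
/-- The chosen element is never `≻̄`-minimal. -/
lemma notMin_choice (hC : IsChoice C) (hW : WCCstar C) (hN : NBCstar C)
    {S : Finset X} (hS : S.Nonempty) : ¬ MinSet (RBar C) S (C S) := by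
  rintro ⟨hmem, ⟨z, hzS, hzx⟩, hnod⟩
  have hpc := hN z (C S) hzx
  obtain ⟨w, hwS, hrb⟩ := lemL hC hW hN _ z (C S) S le_rfl rfl hzS (hC S hS) hpc hzx
  exact hnod w hwS hrb

/-- Sufficiency: the axioms imply CBR-representability. -/
lemma suff_dir (hC : IsChoice C) (hW : WCCstar C) (hN : NBCstar C) (hRW : RWARP C) :
    ∃ R P : X → X → Prop, CBR C R P := by
  classical
  set P0 : X → X → Prop := fun u v =>
    u ≠ v ∧ ∃ S : Finset X, u ∈ S ∧ v ∈ S ∧ C S = u ∧ ¬ MinSet (RBar C) S v with hP0def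
  have hP0asym : ∀ u v, P0 u v → P0 v u → False := by
    rintro u v ⟨hne, S1, huS1, hvS1, hCS1, hmin1⟩ ⟨-, S2, hvS2, huS2, hCS2, hmin2⟩
    exact hRW u v S1 S2 hne huS1 hvS1 huS2 hvS2 hmin1 hCS1 hmin2 hCS2
  set P : X → X → Prop := fun u v => P0 u v ∨ (¬ P0 v u ∧ pc C u v) with hPdef
  have hPirr : ∀ u, ¬ P u u := by
    rintro u (h | ⟨-, h⟩)
    · exact h.1 rfl
    · exact pc_irrefl h
  refine ⟨RBar C, P, fun a b h1 h2 => rbar_asymm hN h1 h2,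
    fun a b c h1 h2 => h1.trans h2, ?_, ?_, ?_⟩
  · -- Asym P
    rintro a b (h1 | ⟨hn1, h1⟩) (h2 | ⟨hn2, h2⟩)
    · exact hP0asym a b h1 h2
    · exact hn2 h1
    · exact hn1 h2
    · exact pc_asymm h1 h2
  · -- Comp P
    intro a b hab
    by_cases h1 : P0 a b
    · exact Or.inl (Or.inl h1)
    by_cases h2 : P0 b a
    · exact Or.inr (Or.inl h2)
    rcases pc_or hC hab with h | h
    · exact Or.inl (Or.inr ⟨h2, h⟩)
    · exact Or.inr (Or.inr ⟨h1, h⟩)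
  · intro S hS x
    have hCSshort : Short (RBar C) S (C S) := ⟨hC S hS, notMin_choice hC hW hN hS⟩
    have hCSmax : ∀ z : X, Short (RBar C) S z → ¬ P z (C S) := by
      intro z hz hPz
      by_cases hzc : z = C S
      · exact hPirr (C S) (hzc ▸ hPz)
      have hP0cz : P0 (C S) z := ⟨Ne.symm hzc, S, hC S hS, hz.1, rfl, hz.2⟩
      rcases hPz with h | ⟨hn, -⟩
      · exact hP0asym _ _ h hP0cz
      · exact hn hP0cz
    constructor
    · rintro ⟨hxshort, hxmax⟩
      by_contra hne
      have h1 : ¬ P x (C S) := hCSmax x hxshort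
      have h2 : ¬ P (C S) x := hxmax (C S) hCSshort
      have hcomp : P x (C S) ∨ P (C S) x := by
        by_cases hp : P0 x (C S)
        · exact Or.inl (Or.inl hp)
        by_cases hq : P0 (C S) x
        · exact Or.inr (Or.inl hq)
        rcases pc_or hC hne with h | h
        · exact Or.inl (Or.inr ⟨hq, h⟩)
        · exact Or.inr (Or.inr ⟨hp, h⟩)
      rcases hcomp with h | h
      · exact h1 h
      · exact h2 h
    · rintro rfl
      exact ⟨hCSshort, hCSmax⟩

end Suff

section Nec
open Finset
variable {X : Type*} [DecidableEq X] {C : Finset X → X} {R P : X → X → Prop}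

lemma choice_short (hcbr : CBR C R P) {S : Finset X} (hS : S.Nonempty) :
    Short R S (C S) ∧ ∀ z, Short R S z → ¬ P z (C S) :=
  (hcbr.2.2.2.2 S hS (C S)).mpr rfl

lemma R_irr (hcbr : CBR C R P) {x : X} (h : R x x) : False := hcbr.1 x x h h
lemma P_irr (hcbr : CBR C R P) {x : X} (h : P x x) : False := hcbr.2.2.1 x x h h

lemma pairR (hcbr : CBR C R P) {x y : X} (h : R x y) : C {x, y} = x := by
  have hne : x ≠ y := fun he => R_irr hcbr (he ▸ h)
  refine ((hcbr.2.2.2.2 {x, y} (pair_nonempty x y) x).mp ⟨⟨by simp, ?_⟩, ?_⟩).symm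
  · rintro ⟨-, -, hnod⟩
    exact hnod y (by simp) h
  · intro z hz
    rcases mem_pair'.1 hz.1 with rfl | rfl
    · exact fun hp => P_irr hcbr hp
    · exfalso
      apply hz.2
      refine ⟨by simp, ⟨x, by simp, h⟩, fun t ht => ?_⟩
      rcases mem_pair'.1 ht with rfl | rfl
      · exact hcbr.1 t z h
      · exact fun hr => R_irr hcbr hr

lemma pairP (hcbr : CBR C R P) {x y : X} (hne : x ≠ y) (h1 : ¬ R x y) (h2 : ¬ R y x)
    (hp : P x y) : C {x, y} = x := by
  refine ((hcbr.2.2.2.2 {x, y} (pair_nonempty x y) x).mp ⟨⟨by simp, ?_⟩, ?_⟩).symm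
  · rintro ⟨-, ⟨z, hz, hzx⟩, -⟩
    rcases mem_pair'.1 hz with rfl | rfl
    · exact R_irr hcbr hzx
    · exact h2 hzx
  · intro z hz
    rcases mem_pair'.1 hz.1 with rfl | rfl
    · exact fun hq => P_irr hcbr hq
    · exact fun hq => hcbr.2.2.1 x z hp hq

lemma pair_cases (hcbr : CBR C R P) {x y : X} (hne : x ≠ y) (h : C {x, y} = x) :
    R x y ∨ (¬ R x y ∧ ¬ R y x ∧ P x y) := by
  by_cases hxy : R x y
  · exact Or.inl hxy
  by_cases hyx : R y x
  · exfalso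
    have := pairR hcbr hyx
    rw [Finset.pair_comm] at this
    exact hne (h.symm.trans this)
  rcases hcbr.2.2.2.1 x y hne with hp | hp
  · exact Or.inr ⟨hxy, hyx, hp⟩
  · exfalso
    have := pairP hcbr (Ne.symm hne) hyx hxy hp
    rw [Finset.pair_comm] at this
    exact hne (h.symm.trans this)

lemma rrel_sub_R (hcbr : CBR C R P) {x y : X} (h : RRel C x y) : R x y := by
  rcases h with ⟨w, T, hwr⟩ | ⟨w, T, hwr⟩ | ⟨w, T, hsr⟩
  · -- weak (x y) reversal due to w
    obtain ⟨⟨hne, hxT, hyT, hwT, hpair, hCT, hCTw⟩, hpcxw⟩ := hwr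
    have nRwx : ¬ R w x := by
      intro hr
      have := pairR hcbr hr
      rw [Finset.pair_comm] at this
      exact hpcxw.1 (hpcxw.2.symm.trans this)
    have hxShortT : Short R T x := by
      have := (choice_short hcbr ⟨x, hxT⟩).1
      rwa [hCT] at this
    have hshort : ¬ MinSet R (insert w T) x := by
      rintro ⟨-, ⟨d, hd, hdx⟩, hnod⟩
      apply hxShortT.2
      refine ⟨hxT, ⟨d, ?_, hdx⟩, fun t ht => hnod t (Finset.mem_insert_of_mem ht)⟩
      rcases Finset.mem_insert.1 hd with rfl | hd'
      · exact absurd hdx nRwx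
      · exact hd'
    have hmax := (choice_short hcbr (S := insert w T) ⟨y, Finset.mem_insert_of_mem hyT⟩).2
    rw [hCTw] at hmax
    have hnPxy : ¬ P x y := hmax x ⟨Finset.mem_insert_of_mem hxT, hshort⟩
    rcases pair_cases hcbr hne hpair with h | ⟨-, -, hPxy⟩
    · exact h
    · exact absurd hPxy hnPxy
  · -- weak (w x) reversal due to y
    obtain ⟨⟨hne, hwT, hxT, hyT, hpair, hCT, hCTy⟩, hpcwy⟩ := hwr
    have nRyw : ¬ R y w := by
      intro hr
      have := pairR hcbr hr
      rw [Finset.pair_comm] at this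
      exact hpcwy.1 (hpcwy.2.symm.trans this)
    have hwShortT : Short R T w := by
      have := (choice_short hcbr ⟨w, hwT⟩).1
      rwa [hCT] at this
    have hwShortIns : ¬ MinSet R (insert y T) w := by
      rintro ⟨-, ⟨d, hd, hdw⟩, hnod⟩
      apply hwShortT.2
      refine ⟨hwT, ⟨d, ?_, hdw⟩, fun t ht => hnod t (Finset.mem_insert_of_mem ht)⟩
      rcases Finset.mem_insert.1 hd with rfl | hd'
      · exact absurd hdw nRyw
      · exact hd'
    have hmax := (choice_short hcbr (S := insert y T) ⟨x, Finset.mem_insert_of_mem hxT⟩).2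
    rw [hCTy] at hmax
    have hnPwx : ¬ P w x := hmax w ⟨Finset.mem_insert_of_mem hwT, hwShortIns⟩
    have hPxw : P x w := by
      rcases hcbr.2.2.2.1 x w (Ne.symm hne) with hp | hp
      · exact hp
      · exact absurd hp hnPwx
    have hmaxT := (choice_short hcbr ⟨w, hwT⟩).2
    rw [hCT] at hmaxT
    have hxMinT : MinSet R T x := by
      by_contra hmin
      exact absurd hPxw (hmaxT x ⟨hxT, hmin⟩)
    obtain ⟨-, ⟨d, hdT, hdx⟩, hnodT⟩ := hxMinT
    have hxShortIns : ¬ MinSet R (insert y T) x := by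
      have := (choice_short hcbr (S := insert y T) ⟨x, Finset.mem_insert_of_mem hxT⟩).1
      rw [hCTy] at this
      exact this.2
    by_contra hnRxy
    apply hxShortIns
    refine ⟨Finset.mem_insert_of_mem hxT, ⟨d, Finset.mem_insert_of_mem hdT, hdx⟩, ?_⟩
    intro t ht
    rcases Finset.mem_insert.1 ht with rfl | ht'
    · exact hnRxy
    · exact hnodT t ht'
  · -- strong (y w) reversal due to x
    obtain ⟨⟨hne, hyT, hwT, hxT, hpair, hCT, hCTx⟩, hpcxy⟩ := hsr
    by_contra hnRxy
    have hyShortT : Short R T y := by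
      have := (choice_short hcbr ⟨y, hyT⟩).1
      rwa [hCT] at this
    have hyShortIns : ¬ MinSet R (insert x T) y := by
      rintro ⟨-, ⟨d, hd, hdy⟩, hnod⟩
      rcases Finset.mem_insert.1 hd with rfl | hd'
      · exact hnRxy hdy
      · exact hyShortT.2 ⟨hyT, ⟨d, hd', hdy⟩, fun t ht => hnod t (Finset.mem_insert_of_mem ht)⟩
    have hmax := (choice_short hcbr (S := insert x T) ⟨w, Finset.mem_insert_of_mem hwT⟩).2
    rw [hCTx] at hmax
    have hnPyw : ¬ P y w := hmax y ⟨Finset.mem_insert_of_mem hyT, hyShortIns⟩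
    have hPwy : P w y := by
      rcases hcbr.2.2.2.1 w y (Ne.symm hne) with hp | hp
      · exact hp
      · exact absurd hp hnPyw
    have hmaxT := (choice_short hcbr ⟨y, hyT⟩).2
    rw [hCT] at hmaxT
    have hwMinT : MinSet R T w := by
      by_contra hmin
      exact absurd hPwy (hmaxT w ⟨hwT, hmin⟩)
    obtain ⟨-, ⟨d, hdT, hdw⟩, hnodT⟩ := hwMinT
    have hwShortIns : ¬ MinSet R (insert x T) w := by
      have := (choice_short hcbr (S := insert x T) ⟨w, Finset.mem_insert_of_mem hwT⟩).1
      rw [hCTx] at this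
      exact this.2
    have hRwx : R w x := by
      by_contra hnRwx
      apply hwShortIns
      refine ⟨Finset.mem_insert_of_mem hwT, ⟨d, Finset.mem_insert_of_mem hdT, hdw⟩, ?_⟩
      intro t ht
      rcases Finset.mem_insert.1 ht with rfl | ht'
      · exact hnRwx
      · exact hnodT t ht'
    have hRyw : R y w := by
      rcases pair_cases hcbr hne hpair with h | ⟨-, -, hPyw⟩
      · exact h
      · exact absurd hPyw (hcbr.2.2.1 w y hPwy)
    have hRyx : R y x := hcbr.2.1 y w x hRyw hRwx
    have := pairR hcbr hRyx
    rw [Finset.pair_comm] at this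
    exact hpcxy.1 (hpcxy.2.symm.trans this)

lemma rbar_sub_R (hcbr : CBR C R P) {x y : X} (h : RBar C x y) : R x y := by
  induction h with
  | single hr => exact rrel_sub_R hcbr hr
  | tail _ hr ih => exact hcbr.2.1 _ _ _ ih (rrel_sub_R hcbr hr)

lemma NBC_nec (hcbr : CBR C R P) : NBCstar C := by
  intro x y h
  have hR : R x y := rbar_sub_R hcbr h
  exact ⟨fun he => R_irr hcbr (he ▸ hR), pairR hcbr hR⟩

lemma NC_nec (hcbr : CBR C R P) (hC : IsChoice C) : NC C := by
  intro S x hxS hex hbeat hCS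
  have hxShort : Short R S x := by
    have := (choice_short hcbr ⟨x, hxS⟩).1
    rwa [hCS] at this
  by_cases hd : ∃ t ∈ S, R x t
  · obtain ⟨t, htS, hxt⟩ := hd
    have htx : t ≠ x := fun he => R_irr hcbr (he ▸ hxt)
    exact hbeat t htS htx (pairR hcbr hxt)
  push_neg at hd
  have hnodom : ∀ d ∈ S, ¬ R d x := by
    intro d hdS hdx
    exact hxShort.2 ⟨hxS, ⟨d, hdS, hdx⟩, hd⟩
  have hmax := (choice_short hcbr ⟨x, hxS⟩).2
  rw [hCS] at hmax
  have hallmin : ∀ y ∈ S, y ≠ x → MinSet R S y := by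
    intro y hyS hyx
    have hCp : C {y, x} = y := by
      have := hC {x, y} (pair_nonempty x y)
      rcases mem_pair'.1 this with h1 | h1
      · exact absurd h1 (hbeat y hyS hyx)
      · rwa [Finset.pair_comm]
    have hPyx : P y x := by
      rcases pair_cases hcbr hyx hCp with h | ⟨-, -, h⟩
      · exact absurd h (hnodom y hyS)
      · exact h
    by_contra hmin
    exact absurd hPyx (hmax y ⟨hyS, hmin⟩)
  obtain ⟨y₁, hy₁S, hy₁x⟩ := hex
  obtain ⟨-, ⟨d, hdS, hdy⟩, -⟩ := hallmin y₁ hy₁S hy₁x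
  have hdx : d ≠ x := fun he => hd y₁ hy₁S (he ▸ hdy)
  exact (hallmin d hdS hdx).2.2 y₁ hy₁S hdy

end Nec

section Nec2
open Finset
variable {X : Type*} [DecidableEq X] {C : Finset X → X} {R P : X → X → Prop}

/-- KW: removing a suitable `z` keeps the choice in `{a, b}`. -/
lemma KW (hcbr : CBR C R P) (hC : IsChoice C) {S : Finset X} {a b z : X}
    (haS : a ∈ S) (hbS : b ∈ S) (hab : a ≠ b) (hCS : C S = a)
    (hzS : z ∈ S) (hza : z ≠ a) (hzb : z ≠ b)
    (h1 : ¬ MinSet R (S.erase z) a)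
    (h2 : ∀ u ∈ S, MinSet R S u → u ≠ z → u ≠ b → ∃ d ∈ S, d ≠ z ∧ R d u) :
    C (S.erase z) = a ∨ C (S.erase z) = b := by
  set T := S.erase z with hT
  have haT : a ∈ T := Finset.mem_erase.2 ⟨Ne.symm hza, haS⟩
  by_contra h
  push_neg at h
  obtain ⟨hma, hmb⟩ := h
  set m := C T with hm
  have hmT : m ∈ T := hC T ⟨a, haT⟩
  have hmS : m ∈ S := Finset.mem_of_mem_erase hmT
  have hmz : m ≠ z := (Finset.mem_erase.1 hmT).1
  have hmShortT : Short R T m := (choice_short hcbr ⟨a, haT⟩).1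
  have hmShortS : Short R S m := by
    refine ⟨hmS, fun hmin => ?_⟩
    apply hmShortT.2
    obtain ⟨d, hdS, hdz, hdm⟩ := h2 m hmS hmin hmz hmb
    exact ⟨hmT, ⟨d, Finset.mem_erase.2 ⟨hdz, hdS⟩, hdm⟩,
      fun t ht => hmin.2.2 t (Finset.mem_of_mem_erase ht)⟩
  have hmaxS := (choice_short hcbr ⟨a, haS⟩).2
  rw [hCS] at hmaxS
  have hnPma : ¬ P m a := hmaxS m hmShortS
  have hmaxT := (choice_short hcbr (S := T) ⟨a, haT⟩).2
  have hnPam : ¬ P a m := hmaxT a ⟨haT, h1⟩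
  rcases hcbr.2.2.2.1 m a hma with hp | hp
  · exact hnPma hp
  · exact hnPam hp

lemma WCC_core (hcbr : CBR C R P) (hC : IsChoice C) {S : Finset X} {a b : X}
    (haS : a ∈ S) (hbS : b ∈ S) (hab : a ≠ b) (hCS : C S = a)
    (hEne : ∃ w ∈ S, w ≠ a ∧ w ≠ b) :
    ∃ z ∈ S, z ≠ a ∧ z ≠ b ∧ (C (S.erase z) = a ∨ C (S.erase z) = b) := by
  have haShort : Short R S a := by
    have := (choice_short hcbr ⟨a, haS⟩).1
    rwa [hCS] at this
  -- c1: if removing z makes a minimal, then a dominates z and nothing else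
  have c1 : ∀ z ∈ S, z ≠ a → MinSet R (S.erase z) a →
      R a z ∧ ∀ t ∈ S, t ≠ z → ¬ R a t := by
    intro z hzS hza hMin
    obtain ⟨-, ⟨d, hdT, hda⟩, hanod⟩ := hMin
    have hnodz : ∀ t ∈ S, t ≠ z → ¬ R a t := fun t ht htz =>
      hanod t (Finset.mem_erase.2 ⟨htz, ht⟩)
    have : ∃ t ∈ S, R a t := by
      by_contra hno
      push_neg at hno
      exact haShort.2 ⟨haS, ⟨d, Finset.mem_of_mem_erase hdT, hda⟩, hno⟩
    obtain ⟨t, htS, hat⟩ := this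
    have htz : t = z := by
      by_contra htz
      exact hnodz t htS htz hat
    exact ⟨htz ▸ hat, hnodz⟩
  by_cases hyp1 : ∃ z ∈ S, z ≠ a ∧ z ≠ b ∧ MinSet R S z ∧ ¬ MinSet R (S.erase z) a
  · obtain ⟨z, hzS, hza, hzb, hzmin, h1z⟩ := hyp1
    refine ⟨z, hzS, hza, hzb, KW hcbr hC haS hbS hab hCS hzS hza hzb h1z ?_⟩
    intro u huS humin hune hunb
    obtain ⟨d, hdS, hdu⟩ := humin.2.1
    have hdz : d ≠ z := fun he => hzmin.2.2 u huS (he ▸ hdu)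
    exact ⟨d, hdS, hdz, hdu⟩
  · by_cases hyp2 : ∃ z ∈ S, z ≠ a ∧ z ≠ b ∧ ¬ MinSet R (S.erase z) a
    · obtain ⟨z, hzS, hza, hzb, h1z⟩ := hyp2
      refine ⟨z, hzS, hza, hzb, KW hcbr hC haS hbS hab hCS hzS hza hzb h1z ?_⟩
      intro u huS humin hune hunb
      have huna : u ≠ a := by
        rintro rfl
        exact haShort.2 humin
      have hMua : MinSet R (S.erase u) a := by
        by_contra hcon
        exact hyp1 ⟨u, huS, huna, hunb, humin, hcon⟩
      have := (c1 u huS huna hMua).1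
      exact ⟨a, haS, Ne.symm hza, this⟩
    · -- every z ∉ {a,b} has MinSet R (S.erase z) a; such z is unique
      push_neg at hyp2
      obtain ⟨w, hwS, hwa, hwb⟩ := hEne
      have hMw := hyp2 w hwS hwa hwb
      obtain ⟨hRaw, hnod⟩ := c1 w hwS hwa hMw
      have huniq : ∀ z ∈ S, z ≠ a → z ≠ b → z = w := by
        intro z hzS hza hzb
        by_contra hzw
        have hMz := hyp2 z hzS hza hzb
        exact hnod z hzS hzw (c1 z hzS hza hMz).1
      have hTeq : S.erase w = {a, b} := by
        ext t
        simp only [Finset.mem_erase, mem_pair']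
        constructor
        · rintro ⟨htw, htS⟩
          by_contra hcon
          push_neg at hcon
          exact htw (huniq t htS hcon.1 hcon.2)
        · rintro (rfl | rfl)
          · exact ⟨Ne.symm hwa, haS⟩
          · exact ⟨Ne.symm hwb, hbS⟩
      refine ⟨w, hwS, hwa, hwb, ?_⟩
      rw [hTeq]
      exact mem_pair'.1 (hC {a, b} (pair_nonempty a b))

lemma WCC_nec (hcbr : CBR C R P) (hC : IsChoice C) : WCCstar C := by
  intro x y S hxy hss hCS
  have hsub := hss.1
  have hxS : x ∈ S := hsub (by simp)
  have hyS : y ∈ S := hsub (by simp [mem_pair'])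
  obtain ⟨w, hwS, hwp⟩ := Finset.exists_of_ssubset hss
  have hwx : w ≠ x := fun h => hwp (by simp [h])
  have hwy : w ≠ y := fun h => hwp (by simp [mem_pair', h])
  rcases hCS with hCx | hCy
  · obtain ⟨z, hzS, hza, hzb, hres⟩ :=
      WCC_core hcbr hC hxS hyS hxy hCx ⟨w, hwS, hwx, hwy⟩
    exact ⟨z, hzS, hza, hzb, hres⟩
  · obtain ⟨z, hzS, hza, hzb, hres⟩ :=
      WCC_core hcbr hC hyS hxS (Ne.symm hxy) hCy ⟨w, hwS, hwy, hwx⟩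
    exact ⟨z, hzS, hzb, hza, hres.symm⟩

end Nec2

section Nec3
open Finset
variable {X : Type*} [DecidableEq X] {C : Finset X → X} {R P : X → X → Prop}

lemma rwarp_aux (hcbr : CBR C R P) (hC : IsChoice C) {x y : X} {S S' : Finset X}
    (hxy : x ≠ y) (hxS : x ∈ S) (hyS : y ∈ S) (hxS' : x ∈ S') (hyS' : y ∈ S')
    (hCS : C S = x) (hCS' : C S' = y)
    (hnMy : ¬ MinSet (RBar C) S y) (hnMx : ¬ MinSet (RBar C) S' x)
    (hyMin : MinSet R S y) : False := by
  have hW : WCCstar C := WCC_nec hcbr hC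
  have ynod : ∀ w ∈ S, ¬ R y w := hyMin.2.2
  have hstar : ∀ z ∈ S, ¬ RBar C z y := by
    intro z hz hrb
    exact hnMy ⟨hyS, ⟨z, hz, hrb⟩, fun w hw hyw => ynod w hw (rbar_sub_R hcbr hyw)⟩
  rcases pc_or hC hxy with hpcxy | hpcyx
  · -- C {x,y} = x
    obtain ⟨u, T', hrev, hsub, huS'⟩ :=
      lemG hC hW S'.card S' y x le_rfl hyS' hxS' (Ne.symm hxy) hCS' hpcxy.2
    have hux : u ≠ x := fun h => hrev.2.2.2.1 (h ▸ hrev.2.1)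
    rcases pc_or hC hux with hpcux | hpcxu
    · -- strong reversal: RBar C u x
      have hrrel : RRel C u x := Or.inr (Or.inr ⟨y, T', hrev, hpcux⟩)
      have hvex : ∃ v ∈ S', RBar C x v := by
        by_contra hno
        push_neg at hno
        exact hnMx ⟨hxS', ⟨u, huS', Relation.TransGen.single hrrel⟩, hno⟩
      obtain ⟨v, hvS', hrxv⟩ := hvex
      have hRxv : R x v := rbar_sub_R hcbr hrxv
      have hxShortS' : ¬ MinSet R S' x := fun hm => hm.2.2 v hvS' hRxv
      have hmaxS' := (choice_short hcbr ⟨y, hyS'⟩).2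
      rw [hCS'] at hmaxS'
      have hnPxy : ¬ P x y := hmaxS' x ⟨hxS', hxShortS'⟩
      have hRxy : R x y := by
        rcases pair_cases hcbr hxy hpcxy.2 with h | ⟨-, -, h⟩
        · exact h
        · exact absurd h hnPxy
      obtain ⟨hne', hxT', hyT', huT', hpair', hCT', hCins⟩ := hrev
      have hPyx : P y x := by
        rcases hcbr.2.2.2.1 y x (Ne.symm hxy) with hp | hp
        · exact hp
        · exact absurd hp hnPxy
      have hmaxT' := (choice_short hcbr (S := T') ⟨x, hxT'⟩).2
      rw [hCT'] at hmaxT'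
      have hyMinT' : MinSet R T' y := by
        by_contra hm
        exact absurd hPyx (hmaxT' y ⟨hyT', hm⟩)
      obtain ⟨-, ⟨d, hdT', hdy⟩, hnodT'⟩ := hyMinT'
      have hyShortIns : ¬ MinSet R (insert u T') y := by
        have := (choice_short hcbr (S := insert u T') ⟨y, Finset.mem_insert_of_mem hyT'⟩).1
        rw [hCins] at this
        exact this.2
      have hRyu : R y u := by
        by_contra hnRyu
        apply hyShortIns
        refine ⟨Finset.mem_insert_of_mem hyT', ⟨d, Finset.mem_insert_of_mem hdT', hdy⟩, ?_⟩
        intro t ht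
        rcases Finset.mem_insert.1 ht with rfl | ht'
        · exact hnRyu
        · exact hnodT' t ht'
      have hRux : R u x := rbar_sub_R hcbr (Relation.TransGen.single hrrel)
      exact hcbr.1 x y hRxy (hcbr.2.1 y u x hRyu hRux)
    · -- weak reversal: RBar C x y, contradicting hstar
      exact hstar x hxS (Relation.TransGen.single (Or.inl ⟨u, T', hrev, hpcxu⟩))
  · -- C {y,x} = y
    obtain ⟨u, T', hrev, hsub, huS⟩ :=
      lemG hC hW S.card S x y le_rfl hxS hyS hxy hCS hpcyx.2
    have huy : u ≠ y := fun h => hrev.2.2.2.1 (h ▸ hrev.2.1)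
    rcases pc_or hC huy with hpcuy | hpcyu
    · exact hstar u huS (Relation.TransGen.single (Or.inr (Or.inr ⟨x, T', hrev, hpcuy⟩)))
    · have hRyx : R y x := rrel_sub_R hcbr (Or.inl ⟨u, T', hrev, hpcyu⟩)
      exact ynod x hxS hRyx

lemma RWARP_nec (hcbr : CBR C R P) (hC : IsChoice C) : RWARP C := by
  intro x y S S' hxy hxS hyS hxS' hyS' hnMy hCS hnMx hCS'
  by_cases hyMin : MinSet R S y
  · exact rwarp_aux hcbr hC hxy hxS hyS hxS' hyS' hCS hCS' hnMy hnMx hyMin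
  by_cases hxMin : MinSet R S' x
  · exact rwarp_aux hcbr hC (Ne.symm hxy) hyS' hxS' hyS hxS hCS' hCS hnMx hnMy hxMin
  · have hmaxS := (choice_short hcbr ⟨x, hxS⟩).2
    rw [hCS] at hmaxS
    have h1 : ¬ P y x := hmaxS y ⟨hyS, hyMin⟩
    have hmaxS' := (choice_short hcbr ⟨y, hyS'⟩).2
    rw [hCS'] at hmaxS'
    have h2 : ¬ P x y := hmaxS' x ⟨hxS', hxMin⟩
    rcases hcbr.2.2.2.1 x y hxy with hp | hp
    · exact h2 hp
    · exact h1 hp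

end Nec3


/-- Theorem 1: a choice function on a finite set is CBR-representable iff it satisfies
NC, WCC*, NBC*, and R-WARP. -/
theorem cbr_characterization {X : Type*} [Fintype X] [DecidableEq X]
    (C : Finset X → X) (hC : IsChoice C) :
    (∃ R P : X → X → Prop, CBR C R P) ↔
      NC C ∧ WCCstar C ∧ NBCstar C ∧ RWARP C := by
  constructor
  · rintro ⟨R, P, hcbr⟩
    exact ⟨NC_nec hcbr hC, WCC_nec hcbr hC, NBC_nec hcbr, RWARP_nec hcbr hC⟩
  · rintro ⟨hNC, hW, hN, hRW⟩
    exact suff_dir hC hW hN hRW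
end

section
/- If a choice function C satisfies NC, WCC*, NBC*, and R-WARP, then C satisfies Exclusivity: for every pair of alternatives (x,y), either C displays no weak (xy) reversal, or C displays no strong (xy) reversal. -/
section AuxExclusivity

variable {X : Type*} [DecidableEq X]

private lemma pc_total {C : Finset X → X} (hC : IsChoice C) {a b : X} (h : a ≠ b) :
    pc C a b ∨ pc C b a := by
  have h1 : C {a, b} ∈ ({a, b} : Finset X) := hC _ ⟨a, Finset.mem_insert_self a {b}⟩
  simp only [Finset.mem_insert, Finset.mem_singleton] at h1
  rcases h1 with h1 | h1
  · exact Or.inl ⟨h, h1⟩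
  · refine Or.inr ⟨h.symm, ?_⟩
    rw [Finset.pair_comm b a]
    exact h1

/-- From a menu `M` containing `a,b`, with `C {a,b} = a` but `C M = b`, WCC* lets us extract a
reversal pattern: a submenu `N` with `C N = a` and `C (insert u N) = b`. -/
private lemma lemA {C : Finset X → X} (hC : IsChoice C) (h2 : WCCstar C) :
    ∀ M : Finset X, ∀ a b : X, a ≠ b → C {a, b} = a → a ∈ M → b ∈ M → C M = b →
      ∃ N u, a ∈ N ∧ b ∈ N ∧ u ∉ N ∧ insert u N ⊆ M ∧ C N = a ∧ C (insert u N) = b := by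
  intro M
  induction M using Finset.strongInduction with
  | _ M ih =>
    intro a b hab hpair haM hbM hM
    have hsub : ({a, b} : Finset X) ⊆ M := by
      intro v hv
      simp only [Finset.mem_insert, Finset.mem_singleton] at hv
      rcases hv with rfl | rfl <;> assumption
    have hss : ({a, b} : Finset X) ⊂ M := by
      refine lt_iff_le_and_ne.mpr ⟨hsub, fun hEq => ?_⟩
      rw [← hEq, hpair] at hM
      exact hab hM
    obtain ⟨t, htM, hta, htb, hch⟩ := h2 a b M hab hss (Or.inr hM)
    rcases hch with hch | hch
    · refine ⟨M.erase t, t, Finset.mem_erase.mpr ⟨Ne.symm hta, haM⟩,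
        Finset.mem_erase.mpr ⟨Ne.symm htb, hbM⟩, Finset.notMem_erase t M, ?_, hch, ?_⟩
      · rw [Finset.insert_erase htM]
      · rw [Finset.insert_erase htM]
        exact hM
    · obtain ⟨N, u, k1, k2, k3, k4, k5, k6⟩ :=
        ih (M.erase t) (Finset.erase_ssubset htM) a b hab hpair
          (Finset.mem_erase.mpr ⟨Ne.symm hta, haM⟩)
          (Finset.mem_erase.mpr ⟨Ne.symm htb, hbM⟩) hch
      exact ⟨N, u, k1, k2, k3, k4.trans (Finset.erase_subset t M), k5, k6⟩

/-- Main induction: no "bad configuration" `(a, c, N)` exists, i.e. no strong-style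
`(a, y)` reversal due to `c` on `N` with `RBar C a y`. -/
private lemma mainExcl {X : Type*} [Fintype X] [DecidableEq X] {C : Finset X → X}
    (hC : IsChoice C) (h2 : WCCstar C) (h3 : NBCstar C) (h4 : RWARP C) (y : X) :
    ∀ m : ℕ, ∀ a c : X, ∀ N : Finset X,
      (insert c N).card * (Fintype.card X + 1) + {v : X | RBar C v a}.ncard ≤ m →
      RBar C a y → C N = a → y ∈ N → c ∉ N → C (insert c N) = y → pc C c a → False := by
  intro m
  induction m using Nat.strong_induction_on with
  | _ m ih =>
    intro a c N hm hay hN hyN hcN hB hca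
    have hpay : pc C a y := h3 a y hay
    have haN : a ∈ N := hN ▸ hC N ⟨y, hyN⟩
    have hyB : y ∈ insert c N := Finset.mem_insert_of_mem hyN
    have haB : a ∈ insert c N := Finset.mem_insert_of_mem haN
    have hcB : c ∈ insert c N := Finset.mem_insert_self c N
    have noloop : ∀ v : X, ¬ RBar C v v := fun v hv => (h3 v v hv).1 rfl
    -- R-WARP forces y to be RBar-minimal in N
    have hMinN : MinSet (RBar C) N y := by
      by_contra hmin
      exact h4 a y N (insert c N) hpay.1 haN hyN haB hyB hmin hN
        (fun hmin' => hmin'.2.2 y hyB hay) hB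
    have minN : ∀ v ∈ N, ¬ RBar C y v := hMinN.2.2
    -- the configuration is itself a strong reversal, revealing c ≻_R a
    have hSrev : StrongRev C a y c N := ⟨⟨hpay.1, haN, hyN, hcN, hpay.2, hN, hB⟩, hca⟩
    have hRca : RBar C c a := Relation.TransGen.single (Or.inr (Or.inr ⟨y, N, hSrev⟩))
    have hRcy : RBar C c y := hRca.trans hay
    have hpcy : pc C c y := h3 c y hRcy
    have hane : a ≠ c := fun h => hca.1 h.symm
    -- dominators of c form a strictly smaller set than dominators of a
    have hdomlt : {v : X | RBar C v c}.ncard < {v : X | RBar C v a}.ncard := by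
      refine Set.ncard_lt_ncard ?_ (Set.toFinite _)
      refine lt_iff_le_and_ne.mpr ⟨fun v hv => hv.trans hRca, fun hEq => ?_⟩
      exact noloop c ((Set.ext_iff.mp hEq c).mpr hRca)
    -- WCC* on the big menu with the pair {c, y}
    have hsubcy : ({c, y} : Finset X) ⊆ insert c N := by
      intro v hv
      simp only [Finset.mem_insert, Finset.mem_singleton] at hv
      rcases hv with rfl | rfl
      · exact hcB
      · exact hyB
    have hsscy : ({c, y} : Finset X) ⊂ insert c N := by
      refine lt_iff_le_and_ne.mpr ⟨hsubcy, fun hEq => ?_⟩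
      have := haB
      rw [← hEq] at this
      simp only [Finset.mem_insert, Finset.mem_singleton] at this
      rcases this with h' | h'
      · exact hane h'
      · exact hpay.1 h'
    obtain ⟨t, htB, htc, hty, hch⟩ := h2 c y (insert c N) hpcy.1 hsscy (Or.inr hB)
    have hyet : y ∈ (insert c N).erase t := Finset.mem_erase.mpr ⟨Ne.symm hty, hyB⟩
    rcases hch with hch | hch
    · -- C (B \ t) = c : a (c,y) reversal due to t on B \ t
      rcases pc_total hC (Ne.symm htc) with hw | hs
      · -- weak: reveals y ≻_R t with t ∈ N, contradicting minimality
        have hcet : c ∈ (insert c N).erase t := Finset.mem_erase.mpr ⟨Ne.symm htc, hcB⟩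
        have hwk : WeakRev C c y t ((insert c N).erase t) :=
          ⟨⟨hpcy.1, hcet, hyet, Finset.notMem_erase t _, hpcy.2, hch, by
            rw [Finset.insert_erase htB]; exact hB⟩, hw⟩
        have hRyt : RBar C y t := Relation.TransGen.single (Or.inr (Or.inl ⟨c, _, hwk⟩))
        have htN : t ∈ N := (Finset.mem_insert.mp htB).resolve_left htc
        exact minN t htN hRyt
      · -- strong: new configuration (c, t, B \ t), same big menu, smaller dominator set
        refine ih ((insert c N).card * (Fintype.card X + 1) + {v : X | RBar C v c}.ncard)
          (lt_of_lt_of_le (Nat.add_lt_add_left hdomlt _) hm) c t ((insert c N).erase t)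
          ?_ hRcy hch hyet (Finset.notMem_erase t _)
          (by rw [Finset.insert_erase htB]; exact hB) hs
        rw [Finset.insert_erase htB]
    · -- C (B \ t) = y : extract a reversal inside the strictly smaller menu B \ t
      obtain ⟨p, hpy, hpB'⟩ : ∃ p, RBar C p y ∧ p ∈ (insert c N).erase t := by
        by_cases hta : t = a
        · exact ⟨c, hRcy, Finset.mem_erase.mpr ⟨Ne.symm htc, hcB⟩⟩
        · exact ⟨a, hay, Finset.mem_erase.mpr ⟨fun h => hta h.symm, haB⟩⟩
      have hppc : pc C p y := h3 p y hpy
      obtain ⟨N', u, hpN', hyN', huN', hsub', hN'p, hinsy⟩ :=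
        lemA hC h2 ((insert c N).erase t) p y hppc.1 hppc.2 hpB' hyet hch
      have hupne : p ≠ u := fun h => huN' (h ▸ hpN')
      rcases pc_total hC hupne with hw | hs
      · -- weak: reveals y ≻_R u
        have hwk : WeakRev C p y u N' := ⟨⟨hppc.1, hpN', hyN', huN', hppc.2, hN'p, hinsy⟩, hw⟩
        have hRyu : RBar C y u := Relation.TransGen.single (Or.inr (Or.inl ⟨p, N', hwk⟩))
        have huB : u ∈ insert c N :=
          (Finset.erase_subset t _) (hsub' (Finset.mem_insert_self u N'))
        rcases Finset.mem_insert.mp huB with rfl | huN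
        · exact noloop y (hRyu.trans hRcy)
        · exact minN u huN hRyu
      · -- strong: new configuration (p, u, N') with strictly smaller big menu
        have hcard : (insert u N').card ≤ ((insert c N).erase t).card :=
          Finset.card_le_card hsub'
        have hcard2 : ((insert c N).erase t).card < (insert c N).card :=
          Finset.card_erase_lt_of_mem htB
        have hdle : {v : X | RBar C v p}.ncard ≤ Fintype.card X := by
          have h' := Set.ncard_le_ncard (Set.subset_univ {v : X | RBar C v p}) Set.finite_univ
          rwa [Set.ncard_univ, Nat.card_eq_fintype_card] at h'
        have hmeas : (insert u N').card * (Fintype.card X + 1) + {v : X | RBar C v p}.ncard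
            < (insert c N).card * (Fintype.card X + 1) + {v : X | RBar C v a}.ncard := by
          have h5 : (insert u N').card + 1 ≤ (insert c N).card :=
            Nat.succ_le_of_lt (lt_of_le_of_lt hcard hcard2)
          calc (insert u N').card * (Fintype.card X + 1) + {v : X | RBar C v p}.ncard
              ≤ (insert u N').card * (Fintype.card X + 1) + Fintype.card X :=
                Nat.add_le_add_left hdle _
            _ < ((insert u N').card + 1) * (Fintype.card X + 1) := by
                rw [Nat.add_mul, Nat.one_mul]
                exact Nat.add_lt_add_left (Nat.lt_succ_self _) _
            _ ≤ (insert c N).card * (Fintype.card X + 1) :=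
                Nat.mul_le_mul_right _ h5
            _ ≤ (insert c N).card * (Fintype.card X + 1) + {v : X | RBar C v a}.ncard :=
                Nat.le_add_right _ _
        exact ih _ (lt_of_lt_of_le hmeas hm) p u N' le_rfl hpy hN'p hyN' huN' hinsy hs

end AuxExclusivity

/-- Exclusivity: if `C` satisfies NC, WCC*, NBC*, and R-WARP, then for every pair `(x,y)`,
either `C` displays no weak `(x y)` reversal or no strong `(x y)` reversal. -/
theorem exclusivity {X : Type*} [Fintype X] [DecidableEq X]
    (C : Finset X → X) (hC : IsChoice C)
    (h1 : NC C) (h2 : WCCstar C) (h3 : NBCstar C) (h4 : RWARP C) :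
    ∀ x y : X,
      (¬ ∃ (z : X) (S : Finset X), WeakRev C x y z S) ∨
      (¬ ∃ (z : X) (S : Finset X), StrongRev C x y z S) := by
  intro x y
  by_contra h
  push_neg at h
  obtain ⟨⟨z, S, hW⟩, w, T, hSt⟩ := h
  have hay : RBar C x y := Relation.TransGen.single (Or.inl ⟨z, S, hW⟩)
  exact mainExcl hC h2 h3 h4 y _ x w T le_rfl hay hSt.1.2.2.2.2.2.1 hSt.1.2.2.1
    hSt.1.2.2.2.1 hSt.1.2.2.2.2.2.2 hSt.2
end

section
/- If a choice function C is CBR-representable, then C satisfies the Small Menu Property: (i) if C displays a weak (xy) reversal due to z, then x ≻_c y, y ≻_c z, and C({x,y,z}) = y; (ii) if C displays a strong (xy) reversal due to z, then either x ≻_c y, y ≻_c z, z ≻_c x and C({x,y,z}) = y, or z ≻_c x, x ≻_c y, C({x,y,z}) = z, and there exists w with C({x,y,w}) = x and C({x,y,z,w}) = y. -/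
/-- Small Menu Property. -/
def SMP {X : Type*} [DecidableEq X] (C : Finset X → X) : Prop :=
  (∀ (x y z : X) (S : Finset X), WeakRev C x y z S →
      pc C x y ∧ pc C y z ∧ C {x, y, z} = y) ∧
  (∀ (x y z : X) (S : Finset X), StrongRev C x y z S →
      (pc C x y ∧ pc C y z ∧ pc C z x ∧ C {x, y, z} = y) ∨
      (pc C z x ∧ pc C x y ∧ C {x, y, z} = z ∧
        ∃ w : X, C {x, y, w} = x ∧ C {x, y, z, w} = y))

/-- If `C` is CBR representable, then `C` satisfies the Small Menu Property. -/
theorem cbr_smp {X : Type*} [Fintype X] [DecidableEq X]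
    (C : Finset X → X) (hC : IsChoice C)
    (hrep : ∃ R P : X → X → Prop, CBR C R P) :
    SMP C := by
  obtain ⟨R, P, hRa, hRt, hPa, hPc, hrep⟩ := hrep
  have irR : ∀ a : X, ¬ R a a := fun a h => hRa _ _ h h
  have irP : ∀ a : X, ¬ P a a := fun a h => hPa a a h h
  -- compute the choice from the representation
  have choose : ∀ (S : Finset X) (x : X), x ∈ S → ¬ MinSet R S x →
      (∀ w ∈ S, ¬ MinSet R S w → w ≠ x → P x w) → C S = x := by
    intro S x hx h1 h2
    refine ((hrep S ⟨x, hx⟩ x).mp ⟨⟨hx, h1⟩, ?_⟩).symm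
    intro w hw hPwx
    by_cases hwx : w = x
    · exact irP x (hwx ▸ hPwx)
    · exact hPa x w (h2 w hw.1 hw.2 hwx) hPwx
  -- the chosen element P-beats every other surviving element
  have cbeats : ∀ (S : Finset X), S.Nonempty → ∀ w ∈ S, ¬ MinSet R S w → w ≠ C S →
      P (C S) w := by
    intro S hne w hwS hwmin hwne
    rcases hPc (C S) w (fun h => hwne h.symm) with h | h
    · exact h
    · exact absurd h (((hrep S hne (C S)).mpr rfl).2 w ⟨hwS, hwmin⟩)
  have pairNR : ∀ a b : X, a ≠ b → C {a, b} = a → ¬ R b a := by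
    intro a b hab hCab hba
    have hs := ((hrep {a, b} ⟨a, by simp⟩ a).mpr hCab.symm).1
    refine hs.2 ⟨by simp, ⟨b, by simp, hba⟩, ?_⟩
    intro w hw haw
    simp only [Finset.mem_insert, Finset.mem_singleton] at hw
    rcases hw with rfl | rfl
    · exact irR _ haw
    · exact hRa _ _ hba haw
  have pairOr : ∀ a b : X, a ≠ b → C {a, b} = a → R a b ∨ P a b := by
    intro a b hab hCab
    by_cases hab' : R a b
    · exact Or.inl hab'
    · right
      have hbmin : ¬ MinSet R {a, b} b := by
        intro hm
        obtain ⟨_, ⟨d, hd, hdb⟩, _⟩ := hm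
        simp only [Finset.mem_insert, Finset.mem_singleton] at hd
        rcases hd with rfl | rfl
        · exact hab' hdb
        · exact irR _ hdb
      have := cbeats {a, b} ⟨a, by simp⟩ b (by simp) hbmin (by rw [hCab]; exact hab.symm)
      rwa [hCab] at this
  have pairC : ∀ a b : X, a ≠ b → (R a b ∨ (¬ R b a ∧ P a b)) → C {a, b} = a := by
    intro a b hab h
    apply choose {a, b} a (by simp)
    · intro hm
      rcases h with h | h
      · exact hm.2.2 b (by simp) h
      · obtain ⟨_, ⟨d, hd, hda⟩, _⟩ := hm
        simp only [Finset.mem_insert, Finset.mem_singleton] at hd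
        rcases hd with rfl | rfl
        · exact irR _ hda
        · exact h.1 hda
    · intro w hw hwmin hwa
      simp only [Finset.mem_insert, Finset.mem_singleton] at hw
      rcases hw with rfl | rfl
      · exact absurd rfl hwa
      · rcases h with h | h
        · exact absurd ⟨by simp, ⟨a, by simp, h⟩, by
            intro v hv hbv
            simp only [Finset.mem_insert, Finset.mem_singleton] at hv
            rcases hv with rfl | rfl
            · exact hRa _ _ h hbv
            · exact irR _ hbv⟩ hwmin
        · exact h.2
  constructor
  · -- Weak reversal part
    rintro x y z S ⟨⟨hxyne, hxS, hyS, hzS, hCxy, hCS, hCM⟩, hxzne, hCxz⟩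
    have hyz : y ≠ z := fun h => hzS (h ▸ hyS)
    have hxM : x ∈ insert z S := Finset.mem_insert_of_mem hxS
    have hyM : y ∈ insert z S := Finset.mem_insert_of_mem hyS
    have hMne : (insert z S).Nonempty := ⟨x, hxM⟩
    have hSne : S.Nonempty := ⟨x, hxS⟩
    have hnRyx : ¬ R y x := pairNR x y hxyne hCxy
    have hXYor := pairOr x y hxyne hCxy
    have hnRzx : ¬ R z x := pairNR x z hxzne hCxz
    have hxshortS : ¬ MinSet R S x := ((hrep S hSne x).mpr hCS.symm).1.2
    have hxminM : ¬ MinSet R (insert z S) x := by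
      rintro ⟨_, ⟨d, hdM, hdx⟩, hnod⟩
      rcases Finset.mem_insert.mp hdM with rfl | hdS
      · exact hnRzx hdx
      · exact hxshortS ⟨hxS, ⟨d, hdS, hdx⟩, fun w hw => hnod w (Finset.mem_insert_of_mem hw)⟩
    have hPyx : P y x := by
      have := cbeats (insert z S) hMne x hxM hxminM (by rw [hCM]; exact hxyne)
      rwa [hCM] at this
    have hRxy : R x y := hXYor.resolve_right (fun hPxy => hPa x y hPxy hPyx)
    have hyminS : MinSet R S y := by
      by_contra h
      exact ((hrep S hSne x).mpr hCS.symm).2 y ⟨hyS, h⟩ hPyx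
    obtain ⟨_, ⟨u, huS, huy⟩, hynod⟩ := hyminS
    have hRyz : R y z := by
      have hyshortM : ¬ MinSet R (insert z S) y := ((hrep _ hMne y).mpr hCM.symm).1.2
      by_contra hnyz
      refine hyshortM ⟨hyM, ⟨u, Finset.mem_insert_of_mem huS, huy⟩, ?_⟩
      intro w hwM hyw
      rcases Finset.mem_insert.mp hwM with rfl | hwS
      · exact hnyz hyw
      · exact hynod w hwS hyw
    have hCT : C {x, y, z} = y := by
      apply choose _ y (by simp)
      · intro hm
        exact hm.2.2 z (by simp) hRyz
      · intro w hw hwmin hwy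
        simp only [Finset.mem_insert, Finset.mem_singleton] at hw
        rcases hw with rfl | rfl | rfl
        · exact hPyx
        · exact absurd rfl hwy
        · refine absurd ⟨by simp, ⟨y, by simp, hRyz⟩, ?_⟩ hwmin
          intro v hv hzv
          simp only [Finset.mem_insert, Finset.mem_singleton] at hv
          rcases hv with rfl | rfl | rfl
          · exact hnRzx hzv
          · exact hRa _ _ hRyz hzv
          · exact irR _ hzv
    exact ⟨⟨hxyne, hCxy⟩, ⟨hyz, pairC y z hyz (Or.inl hRyz)⟩, hCT⟩
  · -- Strong reversal part
    rintro x y z S ⟨⟨hxyne, hxS, hyS, hzS, hCxy, hCS, hCM⟩, hzxne, hCzx⟩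
    have hyz : y ≠ z := fun h => hzS (h ▸ hyS)
    have hxM : x ∈ insert z S := Finset.mem_insert_of_mem hxS
    have hyM : y ∈ insert z S := Finset.mem_insert_of_mem hyS
    have hzM : z ∈ insert z S := Finset.mem_insert_self z S
    have hMne : (insert z S).Nonempty := ⟨x, hxM⟩
    have hSne : S.Nonempty := ⟨x, hxS⟩
    have hnRyx : ¬ R y x := pairNR x y hxyne hCxy
    have hXYor := pairOr x y hxyne hCxy
    have hnRxz : ¬ R x z := pairNR z x hzxne hCzx
    have hZXor := pairOr z x hzxne hCzx
    have hxshortS : ¬ MinSet R S x := ((hrep S hSne x).mpr hCS.symm).1.2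
    by_cases hmin : MinSet R (insert z S) x
    · -- x is eliminated in the big menu; dominator must be z
      obtain ⟨_, ⟨d, hdM, hdx⟩, hnodM⟩ := hmin
      have hRzx : R z x := by
        rcases Finset.mem_insert.mp hdM with rfl | hdS
        · exact hdx
        · exact absurd ⟨hxS, ⟨d, hdS, hdx⟩,
            fun w hw => hnodM w (Finset.mem_insert_of_mem hw)⟩ hxshortS
      have hnodS : ∀ w ∈ S, ¬ R w x := by
        intro w hwS hwx
        exact hxshortS ⟨hxS, ⟨w, hwS, hwx⟩,
          fun v hv => hnodM v (Finset.mem_insert_of_mem hv)⟩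
      have hnRxy : ¬ R x y := hnodM y hyM
      have hPxy : P x y := hXYor.resolve_left hnRxy
      have hzsM : ¬ MinSet R (insert z S) z := fun hm => hm.2.2 x hxM hRzx
      have hPyz : P y z := by
        have := cbeats (insert z S) hMne z hzM hzsM (by rw [hCM]; exact fun h => hyz h.symm)
        rwa [hCM] at this
      by_cases hRzy : R z y
      · -- second disjunct
        right
        have hyshortM : ¬ MinSet R (insert z S) y := ((hrep _ hMne y).mpr hCM.symm).1.2
        have hu : ∃ u ∈ insert z S, R y u := by
          by_contra h
          push_neg at h
          exact hyshortM ⟨hyM, ⟨z, hzM, hRzy⟩, h⟩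
        obtain ⟨u, huM, hRyu⟩ := hu
        have hnuz : u ≠ z := fun h => hRa _ _ hRzy (h ▸ hRyu)
        have huS : u ∈ S := (Finset.mem_insert.mp huM).resolve_left hnuz
        have hnux : u ≠ x := fun h => hnRyx (h ▸ hRyu)
        have hnuy : u ≠ y := fun h => irR _ (h ▸ hRyu)
        have hnRux : ¬ R u x := hnodS u huS
        have hCT : C {x, y, z} = z := by
          apply choose _ z (by simp)
          · intro hm
            exact hm.2.2 x (by simp) hRzx
          · intro w hw hwmin hwz
            simp only [Finset.mem_insert, Finset.mem_singleton] at hw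
            rcases hw with rfl | rfl | rfl
            · refine absurd ⟨by simp, ⟨z, by simp, hRzx⟩, ?_⟩ hwmin
              intro v hv hxv
              simp only [Finset.mem_insert, Finset.mem_singleton] at hv
              rcases hv with rfl | rfl | rfl
              · exact irR _ hxv
              · exact hnRxy hxv
              · exact hnRxz hxv
            · refine absurd ⟨by simp, ⟨z, by simp, hRzy⟩, ?_⟩ hwmin
              intro v hv hyv
              simp only [Finset.mem_insert, Finset.mem_singleton] at hv
              rcases hv with rfl | rfl | rfl
              · exact hnRyx hyv
              · exact irR _ hyv
              · exact hRa _ _ hRzy hyv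
            · exact absurd rfl hwz
        have hCxyu : C {x, y, u} = x := by
          apply choose _ x (by simp)
          · rintro ⟨_, ⟨d, hd, hdx⟩, _⟩
            simp only [Finset.mem_insert, Finset.mem_singleton] at hd
            rcases hd with rfl | rfl | rfl
            · exact irR _ hdx
            · exact hnRyx hdx
            · exact hnRux hdx
          · intro w hw hwmin hwx
            simp only [Finset.mem_insert, Finset.mem_singleton] at hw
            rcases hw with rfl | rfl | rfl
            · exact absurd rfl hwx
            · exact hPxy
            · refine absurd ⟨by simp, ⟨y, by simp, hRyu⟩, ?_⟩ hwmin
              intro v hv huv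
              simp only [Finset.mem_insert, Finset.mem_singleton] at hv
              rcases hv with rfl | rfl | rfl
              · exact hnRux huv
              · exact hRa _ _ hRyu huv
              · exact irR _ huv
        have hCxyzu : C {x, y, z, u} = y := by
          apply choose _ y (by simp)
          · intro hm
            exact hm.2.2 u (by simp) hRyu
          · intro w hw hwmin hwy
            simp only [Finset.mem_insert, Finset.mem_singleton] at hw
            rcases hw with rfl | rfl | rfl | rfl
            · refine absurd ⟨by simp, ⟨z, by simp, hRzx⟩, ?_⟩ hwmin
              intro v hv hxv
              simp only [Finset.mem_insert, Finset.mem_singleton] at hv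
              rcases hv with rfl | rfl | rfl | rfl
              · exact irR _ hxv
              · exact hnRxy hxv
              · exact hnRxz hxv
              · exact hnodM _ huM hxv
            · exact absurd rfl hwy
            · exact hPyz
            · refine absurd ⟨by simp, ⟨y, by simp, hRyu⟩, ?_⟩ hwmin
              intro v hv huv
              simp only [Finset.mem_insert, Finset.mem_singleton] at hv
              rcases hv with rfl | rfl | rfl | rfl
              · exact hnRux huv
              · exact hRa _ _ hRyu huv
              · exact hRa _ _ (hRt _ _ _ hRzy hRyu) huv
              · exact irR _ huv
        exact ⟨⟨hzxne, hCzx⟩, ⟨hxyne, hCxy⟩, hCT, u, hCxyu, hCxyzu⟩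
      · -- first disjunct
        left
        have hCT : C {x, y, z} = y := by
          apply choose _ y (by simp)
          · rintro ⟨_, ⟨d, hd, hdy⟩, _⟩
            simp only [Finset.mem_insert, Finset.mem_singleton] at hd
            rcases hd with rfl | rfl | rfl
            · exact hnRxy hdy
            · exact irR _ hdy
            · exact hRzy hdy
          · intro w hw hwmin hwy
            simp only [Finset.mem_insert, Finset.mem_singleton] at hw
            rcases hw with rfl | rfl | rfl
            · refine absurd ⟨by simp, ⟨z, by simp, hRzx⟩, ?_⟩ hwmin
              intro v hv hxv
              simp only [Finset.mem_insert, Finset.mem_singleton] at hv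
              rcases hv with rfl | rfl | rfl
              · exact irR _ hxv
              · exact hnRxy hxv
              · exact hnRxz hxv
            · exact absurd rfl hwy
            · exact hPyz
        exact ⟨⟨hxyne, hCxy⟩, ⟨hyz, pairC y z hyz (Or.inr ⟨hRzy, hPyz⟩)⟩, ⟨hzxne, hCzx⟩, hCT⟩
    · -- x survives in the big menu: derive a contradiction
      exfalso
      have hPyx : P y x := by
        have := cbeats (insert z S) hMne x hxM hmin (by rw [hCM]; exact hxyne)
        rwa [hCM] at this
      have hRxy : R x y := hXYor.resolve_right (fun hPxy => hPa x y hPxy hPyx)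
      have hyminS : MinSet R S y := by
        by_contra h
        exact ((hrep S hSne x).mpr hCS.symm).2 y ⟨hyS, h⟩ hPyx
      obtain ⟨_, ⟨u, huS, huy⟩, hynod⟩ := hyminS
      have hRyz : R y z := by
        have hyshortM : ¬ MinSet R (insert z S) y := ((hrep _ hMne y).mpr hCM.symm).1.2
        by_contra hnyz
        refine hyshortM ⟨hyM, ⟨u, Finset.mem_insert_of_mem huS, huy⟩, ?_⟩
        intro w hwM hyw
        rcases Finset.mem_insert.mp hwM with rfl | hwS
        · exact hnyz hyw
        · exact hynod w hwS hyw
      exact hnRxz (hRt x y z hRxy hRyz)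
end

section
/- If a choice function C satisfies NC, WCC*, NBC*, and R-WARP, then C satisfies the Small Menu Property: (i) if C displays a weak (xy) reversal due to z, then x ≻_c y, y ≻_c z, and C({x,y,z}) = y; (ii) if C displays a strong (xy) reversal due to z, then either x ≻_c y, y ≻_c z, z ≻_c x and C({x,y,z}) = y, or z ≻_c x, x ≻_c y, C({x,y,z}) = z, and there exists w with C({x,y,w}) = x and C({x,y,z,w}) = y. -/
section Infra
variable {X : Type*} [DecidableEq X]

private lemma pc_asymm_s5 {C : Finset X → X} {a b : X} (h : pc C a b) : ¬ pc C b a := by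
  rintro ⟨hne, hb⟩
  rw [Finset.pair_comm b a] at hb
  exact h.1 (h.2.symm.trans hb)

private lemma notMin_dom {C : Finset X → X} {M : Finset X} {a b : X}
    (h : RBar C a b) (hb : b ∈ M) : ¬ MinSet (RBar C) M a :=
  fun hm => hm.2.2 b hb h

private lemma rbar_weak1 {C : Finset X → X} {p q w : X} {V : Finset X}
    (h : WeakRev C p q w V) : RBar C p q :=
  Relation.TransGen.single (Or.inl ⟨w, V, h⟩)

private lemma rbar_weak2 {C : Finset X → X} {w p q : X} {V : Finset X}
    (h : WeakRev C w p q V) : RBar C p q :=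
  Relation.TransGen.single (Or.inr (Or.inl ⟨w, V, h⟩))

private lemma rbar_strong {C : Finset X → X} {q w p : X} {V : Finset X}
    (h : StrongRev C q w p V) : RBar C p q :=
  Relation.TransGen.single (Or.inr (Or.inr ⟨w, V, h⟩))

private lemma rbar_irrefl_s5 {C : Finset X → X} (h3 : NBCstar C) (a : X) : ¬ RBar C a a :=
  fun h => (h3 a a h).1 rfl

private lemma nc_victim {C : Finset X → X} (h1 : NC C) {M : Finset X} {u a : X}
    (hu : u ∈ M) (hcm : C M = u) (ha : a ∈ M) (hau : a ≠ u) :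
    ∃ v ∈ M, v ≠ u ∧ C {u, v} = u := by
  by_contra hcon
  push_neg at hcon
  exact h1 M u hu ⟨a, ha, hau⟩ (fun v hv hvu => hcon v hv hvu) hcm

private lemma exists_minimal_menu (P : Finset X → Prop) [DecidablePred P] {U0 W : Finset X}
    (hW : W ⊆ U0) (h : P W) : ∃ N, N ⊆ U0 ∧ P N ∧ ∀ M, M ⊆ U0 → P M → N.card ≤ M.card := by
  obtain ⟨N, hN, hmin⟩ := Finset.exists_min_image (U0.powerset.filter P) Finset.card
    ⟨W, by simp [Finset.mem_filter, Finset.mem_powerset, hW, h]⟩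
  simp only [Finset.mem_filter, Finset.mem_powerset] at hN
  exact ⟨N, hN.1, hN.2, fun M hM hPM =>
    hmin M (by simp [Finset.mem_filter, Finset.mem_powerset, hM, hPM])⟩

end Infra

section Killer
variable {X : Type*} [DecidableEq X]

set_option linter.unusedSectionVars false

/-- The "disjunct-2 killer": from `C {a,y,c} = c`, `C {a,y,v} = a`, `C {a,y,c,v} = y`
    together with `a ≻ y`, `c ≻ y`, `a ≻̄ y`, `c ≻̄ y`, derive a contradiction. -/
private lemma killer (C : Finset X → X) (hC : IsChoice C) (h1 : NC C) (h3 : NBCstar C)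
    (h4 : RWARP C) {y a c v : X}
    (hay : pc C a y) (hcy : pc C c y) (hac : a ≠ c)
    (hady : RBar C a y) (hcdy : RBar C c y)
    (h5 : C {a, y, c} = c) (h6 : C {a, y, v} = a) (h7 : C {a, y, c, v} = y) : False := by
  have hane : a ≠ y := hay.1
  have hcne : c ≠ y := hcy.1
  -- v is distinct from a, y, c
  have hva : v ≠ a := by
    intro hveq
    have he : ({a, y, c, v} : Finset X) = {a, y, c} := by
      ext u; simp only [Finset.mem_insert, Finset.mem_singleton, hveq]; tauto
    rw [he, h5] at h7; exact hcne h7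
  have hvy : v ≠ y := by
    intro hveq
    have he : ({a, y, c, v} : Finset X) = {a, y, c} := by
      ext u; simp only [Finset.mem_insert, Finset.mem_singleton, hveq]; tauto
    rw [he, h5] at h7; exact hcne h7
  have hvc : v ≠ c := by
    rintro rfl
    rw [h5] at h6; exact hac h6.symm
  have hQ : C (insert v {a, y, c}) = y := by
    have he : (insert v {a, y, c} : Finset X) = {a, y, c, v} := by
      ext u; simp only [Finset.mem_insert, Finset.mem_singleton]; try tauto
    rw [he]; exact h7
  have hrev : Rev C c y v {a, y, c} := by
    refine ⟨hcne, by simp, by simp, ?_, hcy.2, h5, hQ⟩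
    simp only [Finset.mem_insert, Finset.mem_singleton]
    push_neg; exact ⟨hva, hvy, hvc⟩
  have hcv : c ≠ v := fun h => hvc h.symm
  rcases pc_total hC hcv with hpc | hpc
  · -- weak reversal: y ≻̄ v
    have hyv : RBar C y v := rbar_weak2 ⟨hrev, hpc⟩
    have := h4 y a (insert v {a, y, c}) {a, y, v} (fun h => hane h.symm)
      (by simp) (by simp) (by simp) (by simp)
      (notMin_dom hady (by simp)) hQ (notMin_dom hyv (by simp))
    exact this h6
  · -- strong reversal: v ≻̄ c, hence v ≻̄ y
    have hvdc : RBar C v c := rbar_strong ⟨hrev, hpc⟩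
    have hvdy : RBar C v y := hvdc.trans hcdy
    have hpvy : pc C v y := h3 v y hvdy
    have hvic : ∀ u ∈ (insert v {a, y, c} : Finset X), u ≠ y → C {y, u} ≠ y := by
      intro u hu huy
      simp only [Finset.mem_insert, Finset.mem_singleton] at hu
      rcases hu with rfl | rfl | rfl | rfl
      · rw [Finset.pair_comm]; rw [hpvy.2]; exact hpvy.1
      · rw [Finset.pair_comm]; rw [hay.2]; exact hane
      · exact absurd rfl huy
      · rw [Finset.pair_comm]; rw [hcy.2]; exact hcne
    exact h1 (insert v {a, y, c}) y (by simp) ⟨a, by simp, hane⟩ hvic hQ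

end Killer

section ZwSub
variable {X : Type*} [DecidableEq X]

set_option linter.unusedSectionVars false

/-- The "Zw subtree": given the loop invariants and a fresh element `w'` with `y ≻̄ w'`
    (arising from a weak flip), either produce the witness pair or a contradiction. -/
private lemma zwSub (C : Finset X → X) (hC : IsChoice C) (h1 : NC C) (h2 : WCCstar C)
    (h3 : NBCstar C) (h4 : RWARP C) {y a c w' : X} {U : Finset X}
    (pcay : pc C a y) (pcca : pc C c a) (pccw : pc C c w')
    (hcda : RBar C c a) (hcdy : RBar C c y) (hydw : RBar C y w')
    (haU : a ∈ U) (hyU : y ∈ U) (hcU : c ∈ U) (hwU : w' ∈ U)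
    (hwa : w' ≠ a) (hwy : w' ≠ y) (hwc : w' ≠ c)
    (hUy : C U = y) (hVa : C (U.erase c) = a) (hTc : C {a, y, c} = c) :
    ∃ v, C {a, y, v} = a ∧ C {a, y, c, v} = y := by
  have hane : a ≠ y := pcay.1
  have hca : c ≠ a := pcca.1
  have hcyne : c ≠ y := (h3 c y hcdy).1
  have pcyw : pc C y w' := h3 y w' hydw
  have haw : a ≠ w' := fun h => hwa h.symm
  have hE1 : (insert w' {a, y} : Finset X) = {a, y, w'} := by
    ext u; simp only [Finset.mem_insert, Finset.mem_singleton]; try tauto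
  have hE2 : (insert a {y, w'} : Finset X) = {a, y, w'} := by
    ext u; simp only [Finset.mem_insert, Finset.mem_singleton]; try tauto
  have hE3 : (insert w' {a, y, c} : Finset X) = {a, y, c, w'} := by
    ext u; simp only [Finset.mem_insert, Finset.mem_singleton]; try tauto
  have hE4 : (insert a {y, c, w'} : Finset X) = {a, y, c, w'} := by
    ext u; simp only [Finset.mem_insert, Finset.mem_singleton]; try tauto
  have hm3 := hC {a, y, w'} ⟨a, by simp⟩
  simp only [Finset.mem_insert, Finset.mem_singleton] at hm3
  rcases hm3 with hv3 | hv3 | hv3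
  · -- C {a,y,w'} = a : look at the 4-menu
    have hm4 := hC {a, y, c, w'} ⟨a, by simp⟩
    simp only [Finset.mem_insert, Finset.mem_singleton] at hm4
    rcases hm4 with ht4 | ht4 | ht4 | ht4
    · -- t4 = a
      have hrev : Rev C c a w' {a, y, c} := by
        refine ⟨hca, by simp, by simp, ?_, pcca.2, hTc, by rw [hE3]; exact ht4⟩
        simp only [Finset.mem_insert, Finset.mem_singleton]; push_neg
        exact ⟨hwa, hwy, hwc⟩
      have hadw : RBar C a w' := rbar_weak2 ⟨hrev, pccw⟩
      exact absurd hUy (h4 a y {a, y, c, w'} U hane (by simp) (by simp) haU hyU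
        (notMin_dom hydw (by simp)) ht4 (notMin_dom hadw hwU))
    · -- t4 = y : witness!
      exact ⟨w', hv3, ht4⟩
    · -- t4 = c
      exact absurd ht4 (h4 y c U {a, y, c, w'} (fun h => hcyne h.symm) hyU hcU
        (by simp) (by simp) (notMin_dom hcda haU) hUy (notMin_dom hydw (by simp)))
    · -- t4 = w'
      have hpwa : pc C w' a := by
        obtain ⟨u, hu, huw, hval⟩ := nc_victim h1 (show w' ∈ ({a, y, c, w'} : Finset X) by simp)
          ht4 (show a ∈ ({a, y, c, w'} : Finset X) by simp) haw
        simp only [Finset.mem_insert, Finset.mem_singleton] at hu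
        rcases hu with rfl | rfl | rfl | rfl
        · exact ⟨hwa, hval⟩
        · exact ((pc_asymm_s5 pcyw) ⟨hwy, hval⟩).elim
        · exact ((pc_asymm_s5 pccw) ⟨hwc, hval⟩).elim
        · exact (huw rfl).elim
      have hsub4 : ({w', y} : Finset X) ⊆ {a, y, c, w'} := by
        intro u hu
        simp only [Finset.mem_insert, Finset.mem_singleton] at hu ⊢
        tauto
      have hss4 : ({w', y} : Finset X) ⊂ {a, y, c, w'} := by
        rw [Finset.ssubset_iff_of_subset hsub4]
        refine ⟨a, by simp, ?_⟩
        simp only [Finset.mem_insert, Finset.mem_singleton]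
        push_neg
        exact ⟨haw, hane⟩
      obtain ⟨e, heM, hew, hey, hvale⟩ := h2 w' y {a, y, c, w'} hwy hss4 (Or.inl ht4)
      simp only [Finset.mem_insert, Finset.mem_singleton] at heM
      rcases heM with he | he | he | he
      · -- e = a
        rw [he] at hvale
        have herase : ({a, y, c, w'} : Finset X).erase a = {y, c, w'} :=
          Finset.erase_insert (by
            simp only [Finset.mem_insert, Finset.mem_singleton]; push_neg
            exact ⟨hane, fun h => hca h.symm, haw⟩)
        rw [herase] at hvale
        rcases hvale with hv | hv
        · -- C {y,c,w'} = w'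
          obtain ⟨u, hu, huw, hval⟩ := nc_victim h1 (show w' ∈ ({y, c, w'} : Finset X) by simp)
            hv (show y ∈ ({y, c, w'} : Finset X) by simp) (fun h => hwy h.symm)
          simp only [Finset.mem_insert, Finset.mem_singleton] at hu
          rcases hu with rfl | rfl | rfl
          · exact ((pc_asymm_s5 pcyw) ⟨hwy, hval⟩).elim
          · exact ((pc_asymm_s5 pccw) ⟨hwc, hval⟩).elim
          · exact (huw rfl).elim
        · -- C {y,c,w'} = y
          have hrev : Rev C y w' a {y, c, w'} := by
            refine ⟨fun h => hwy h.symm, by simp, by simp, ?_, pcyw.2, hv,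
              by rw [hE4]; exact ht4⟩
            simp only [Finset.mem_insert, Finset.mem_singleton]; push_neg
            exact ⟨hane, fun h => hca h.symm, haw⟩
          have hady : RBar C a y := rbar_strong ⟨hrev, pcay⟩
          have hadw : RBar C a w' := hady.trans hydw
          exact ((pc_asymm_s5 hpwa) (h3 a w' hadw)).elim
      · exact (hey he).elim
      · -- e = c
        rw [he] at hvale
        have herase : ({a, y, c, w'} : Finset X).erase c = {a, y, w'} := by
          ext u
          simp only [Finset.mem_erase, Finset.mem_insert, Finset.mem_singleton]
          constructor
          · rintro ⟨h1', h2' | h2' | h2' | h2'⟩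
            · exact Or.inl h2'
            · exact Or.inr (Or.inl h2')
            · exact absurd h2' h1'
            · exact Or.inr (Or.inr h2')
          · rintro (rfl | rfl | rfl)
            · exact ⟨fun h => hca h.symm, Or.inl rfl⟩
            · exact ⟨fun h => hcyne h.symm, Or.inr (Or.inl rfl)⟩
            · exact ⟨hwc, Or.inr (Or.inr (Or.inr rfl))⟩
        rw [herase, hv3] at hvale
        rcases hvale with hv | hv
        · exact (haw hv).elim
        · exact (hane hv).elim
      · exact (hew he).elim
  · -- C {a,y,w'} = y
    have hrev : Rev C a y w' {a, y} := by
      refine ⟨hane, by simp, by simp, ?_, pcay.2, pcay.2, by rw [hE1]; exact hv3⟩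
      simp only [Finset.mem_insert, Finset.mem_singleton]; push_neg
      exact ⟨hwa, hwy⟩
    rcases pc_total hC haw with hpaw | hpwa
    · have hxy : RBar C a y := rbar_weak1 ⟨hrev, hpaw⟩
      exact absurd hVa (h4 y a {a, y, w'} (U.erase c) (fun h => hane h.symm)
        (by simp) (by simp)
        (Finset.mem_erase.mpr ⟨fun h => hcyne h.symm, hyU⟩)
        (Finset.mem_erase.mpr ⟨fun h => hca h.symm, haU⟩)
        (notMin_dom hxy (by simp)) hv3
        (notMin_dom hydw (Finset.mem_erase.mpr ⟨hwc, hwU⟩)))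
    · have hwda : RBar C w' a := rbar_strong ⟨hrev, hpwa⟩
      have hyda : RBar C y a := hydw.trans hwda
      exact ((pc_asymm_s5 pcay) (h3 y a hyda)).elim
  · -- C {a,y,w'} = w'
    have hpwa : pc C w' a := by
      obtain ⟨u, hu, huw, hval⟩ := nc_victim h1 (show w' ∈ ({a, y, w'} : Finset X) by simp)
        hv3 (show a ∈ ({a, y, w'} : Finset X) by simp) haw
      simp only [Finset.mem_insert, Finset.mem_singleton] at hu
      rcases hu with rfl | rfl | rfl
      · exact ⟨hwa, hval⟩
      · exact ((pc_asymm_s5 pcyw) ⟨hwy, hval⟩).elim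
      · exact (huw rfl).elim
    have hrev : Rev C y w' a {y, w'} := by
      refine ⟨fun h => hwy h.symm, by simp, by simp, ?_, pcyw.2, pcyw.2,
        by rw [hE2]; exact hv3⟩
      simp only [Finset.mem_insert, Finset.mem_singleton]; push_neg
      exact ⟨hane, haw⟩
    have hady : RBar C a y := rbar_strong ⟨hrev, pcay⟩
    have hadw : RBar C a w' := hady.trans hydw
    exact ((pc_asymm_s5 hpwa) (h3 a w' hadw)).elim

end ZwSub

section ParamX
variable {X : Type*} [DecidableEq X]

set_option linter.unusedSectionVars false

/-- Parameterized "X-branch": a strong (a,y) reversal due to c on V with U = insert c V,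
    where additionally `C {a,y,c} = a`, is contradictory (given the induction hypothesis
    for strictly smaller menus). -/
private lemma paramX (C : Finset X → X) (hC : IsChoice C) (h1 : NC C) (h2 : WCCstar C)
    (h3 : NBCstar C) (h4 : RWARP C) {n : ℕ}
    (IH : ∀ x' y' z' : X, ∀ S' : Finset X, StrongRev C x' y' z' S' → (insert z' S').card < n →
      (pc C x' y' ∧ pc C y' z' ∧ pc C z' x' ∧ C {x', y', z'} = y') ∨
      (pc C z' x' ∧ pc C x' y' ∧ C {x', y', z'} = z' ∧
        ∃ w, C {x', y', w} = x' ∧ C {x', y', z', w} = y'))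
    {y a c : X} {V U : Finset X}
    (hsr : StrongRev C a y c V) (hUdef : U = insert c V) (hcard : U.card = n)
    (hTa : C {a, y, c} = a) : False := by
  obtain ⟨⟨hane, haV, hyV, hcV, hpair, hVa, hU'y⟩, hpca⟩ := hsr
  have pcay : pc C a y := ⟨hane, hpair⟩
  have hUy : C U = y := by rw [hUdef]; exact hU'y
  have hca : c ≠ a := hpca.1
  have hcy : c ≠ y := fun h => hcV (h ▸ hyV)
  have haU : a ∈ U := by rw [hUdef]; exact Finset.mem_insert_of_mem haV
  have hyU : y ∈ U := by rw [hUdef]; exact Finset.mem_insert_of_mem hyV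
  have hcU : c ∈ U := by rw [hUdef]; exact Finset.mem_insert_self c V
  have hcda : RBar C c a := rbar_strong ⟨⟨hane, haV, hyV, hcV, hpair, hVa, hU'y⟩, hpca⟩
  have hEca : (insert y {c, a} : Finset X) = {a, y, c} := by
    ext u; simp only [Finset.mem_insert, Finset.mem_singleton]; try tauto
  have hrevCA : Rev C c a y {c, a} := by
    refine ⟨hca, by simp, by simp, ?_, hpca.2, hpca.2, by rw [hEca]; exact hTa⟩
    simp only [Finset.mem_insert, Finset.mem_singleton]; push_neg
    exact ⟨fun h => hcy h.symm, hane.symm⟩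
  rcases pc_total hC (show y ≠ c from fun h => hcy h.symm) with hpyc | hpcy
  · -- y ≻ c : strong reversal gives y ≻̄ c hence y ≻̄ a, contradiction
    have hydc : RBar C y c := rbar_strong ⟨hrevCA, hpyc⟩
    exact pc_asymm_s5 pcay (h3 y a (hydc.trans hcda))
  · -- c ≻ y
    have hcdy : RBar C c y := by
      by_contra hn
      refine (h4 y c U {y, c} (fun h => hcy h.symm) hyU hcU (by simp) (by simp)
        (notMin_dom hcda haU) hUy ?_) (by rw [Finset.pair_comm]; exact hpcy.2)
      rintro ⟨-, ⟨u, hu, hud⟩, -⟩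
      simp only [Finset.mem_insert, Finset.mem_singleton] at hu
      rcases hu with h | h
      · exact rbar_irrefl_s5 h3 y (h ▸ hud)
      · exact hn (h ▸ hud)
    have hady : RBar C a y := rbar_weak2 ⟨hrevCA, hpcy⟩
    -- minimal menu M with a,y,c ∈ M ⊆ U and C M = y
    obtain ⟨M, hMU, ⟨haM, hyM, hcM, hMy⟩, hMmin⟩ := exists_minimal_menu
      (fun M => a ∈ M ∧ y ∈ M ∧ c ∈ M ∧ C M = y) (Finset.Subset.refl U) ⟨haU, hyU, hcU, hUy⟩
    have hssM : ({c, y} : Finset X) ⊂ M := by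
      rw [Finset.ssubset_iff_of_subset (by
        intro u hu; simp only [Finset.mem_insert, Finset.mem_singleton] at hu
        rcases hu with rfl | rfl; exacts [hcM, hyM])]
      refine ⟨a, haM, ?_⟩
      simp only [Finset.mem_insert, Finset.mem_singleton]; push_neg
      exact ⟨fun h => hca h.symm, hane⟩
    obtain ⟨w', hw'M, hw'c, hw'y, hvalM⟩ := h2 c y M hcy hssM (Or.inr hMy)
    by_cases hw'a : w' = a
    · rw [hw'a] at hvalM
      rcases hvalM with hvc | hvy
      · -- C (M.erase a) = c
        have hrev2 : Rev C c y a (M.erase a) := by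
          refine ⟨hcy, Finset.mem_erase.mpr ⟨hca, hcM⟩,
            Finset.mem_erase.mpr ⟨hane.symm, hyM⟩, Finset.notMem_erase a M, hpcy.2, hvc,
            by rw [Finset.insert_erase haM]; exact hMy⟩
        have hyda : RBar C y a := rbar_weak2 ⟨hrev2, hpca⟩
        exact pc_asymm_s5 pcay (h3 y a hyda)
      · -- C (M.erase a) = y : go to the a-free minimal machinery
        obtain ⟨N, hNU, ⟨hyN, hcN, hNy⟩, hNmin⟩ := exists_minimal_menu
          (fun M' => y ∈ M' ∧ c ∈ M' ∧ C M' = y)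
          (Finset.erase_subset_erase a hMU)
          ⟨Finset.mem_erase.mpr ⟨hane.symm, hyM⟩, Finset.mem_erase.mpr ⟨hca, hcM⟩, hvy⟩
        have hssN : ({c, y} : Finset X) ⊂ N := by
          rw [Finset.ssubset_iff_subset_ne]
          constructor
          · intro u hu; simp only [Finset.mem_insert, Finset.mem_singleton] at hu
            rcases hu with rfl | rfl; exacts [hcN, hyN]
          · intro h
            rw [← h] at hNy
            rw [hpcy.2] at hNy
            exact hcy hNy
        obtain ⟨w4, hw4N, hw4c, hw4y, hvalN⟩ := h2 c y N hcy hssN (Or.inr hNy)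
        have hvc4 : C (N.erase w4) = c := by
          rcases hvalN with h | h
          · exact h
          · exfalso
            have hle := hNmin (N.erase w4) ((Finset.erase_subset w4 N).trans hNU)
              ⟨Finset.mem_erase.mpr ⟨fun hh => hw4y hh.symm, hyN⟩,
               Finset.mem_erase.mpr ⟨fun hh => hw4c hh.symm, hcN⟩, h⟩
            rw [Finset.card_erase_of_mem hw4N] at hle
            have hpos : 0 < N.card := Finset.card_pos.mpr ⟨w4, hw4N⟩
            omega
        have hrevN : Rev C c y w4 (N.erase w4) := by
          refine ⟨hcy, Finset.mem_erase.mpr ⟨fun hh => hw4c hh.symm, hcN⟩,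
            Finset.mem_erase.mpr ⟨fun hh => hw4y hh.symm, hyN⟩, Finset.notMem_erase w4 N,
            hpcy.2, hvc4, by rw [Finset.insert_erase hw4N]; exact hNy⟩
        rcases pc_total hC (show c ≠ w4 from fun h => hw4c h.symm) with hpcw | hpwc
        · -- weak: y ≻̄ w4 with w4 ∈ V : RWARP kills C V = a
          have hydw4 : RBar C y w4 := rbar_weak2 ⟨hrevN, hpcw⟩
          have hw4V : w4 ∈ V := by
            have h1' : w4 ∈ U.erase a := hNU hw4N
            have h2' : w4 ∈ U := (Finset.mem_erase.mp h1').2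
            rw [hUdef] at h2'
            rcases Finset.mem_insert.mp h2' with h | h
            · exact absurd h hw4c
            · exact h
          exact absurd hVa (h4 y a U V (fun h => hane h.symm) hyU haU hyV haV
            (notMin_dom hady hyU) hUy (notMin_dom hydw4 hw4V))
        · -- strong: w4 ≻̄ c ; use IH on the smaller strong reversal
          have hw4dc : RBar C w4 c := rbar_strong ⟨hrevN, hpwc⟩
          have hw4dy : RBar C w4 y := hw4dc.trans hcdy
          have hcard' : (insert w4 (N.erase w4)).card < n := by
            rw [Finset.insert_erase hw4N]
            calc N.card ≤ (U.erase a).card := Finset.card_le_card hNU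
              _ < U.card := Finset.card_erase_lt_of_mem haU
              _ = n := hcard
          rcases IH c y w4 (N.erase w4) ⟨hrevN, hpwc⟩ hcard' with
            ⟨-, hyw4, -, -⟩ | ⟨-, -, h5', v, h6', h7'⟩
          · exact pc_asymm_s5 (h3 w4 y hw4dy) hyw4
          · exact killer C hC h1 h3 h4 hpcy (h3 w4 y hw4dy)
              (fun h => hw4c h.symm) hcdy hw4dy h5' h6' h7'
    · -- w' ≠ a : minimality forces C (M.erase w') = c, RWARP contradiction
      have hvc : C (M.erase w') = c := by
        rcases hvalM with h | h
        · exact h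
        · exfalso
          have hle := hMmin (M.erase w') ((Finset.erase_subset w' M).trans hMU)
            ⟨Finset.mem_erase.mpr ⟨fun hh => hw'a hh.symm, haM⟩,
             Finset.mem_erase.mpr ⟨fun hh => hw'y hh.symm, hyM⟩,
             Finset.mem_erase.mpr ⟨fun hh => hw'c hh.symm, hcM⟩, h⟩
          rw [Finset.card_erase_of_mem hw'M] at hle
          have hpos : 0 < M.card := Finset.card_pos.mpr ⟨w', hw'M⟩
          omega
      exact absurd hvc (h4 a c {a, y, c} (M.erase w') (fun h => hca h.symm)
        (by simp) (by simp)
        (Finset.mem_erase.mpr ⟨fun h => hw'a h.symm, haM⟩)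
        (Finset.mem_erase.mpr ⟨fun h => hw'c h.symm, hcM⟩)
        (notMin_dom hcda (by simp)) hTa
        (notMin_dom hady (Finset.mem_erase.mpr ⟨fun h => hw'y h.symm, hyM⟩)))

end ParamX

section LoopZ
variable {X : Type*} [DecidableEq X]

set_option linter.unusedSectionVars false

private lemma loopZ (C : Finset X → X) (hC : IsChoice C) (h1 : NC C) (h2 : WCCstar C)
    (h3 : NBCstar C) (h4 : RWARP C) {n : ℕ}
    (IH : ∀ x' y' z' : X, ∀ S' : Finset X, StrongRev C x' y' z' S' → (insert z' S').card < n →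
      (pc C x' y' ∧ pc C y' z' ∧ pc C z' x' ∧ C {x', y', z'} = y') ∨
      (pc C z' x' ∧ pc C x' y' ∧ C {x', y', z'} = z' ∧
        ∃ w, C {x', y', w} = x' ∧ C {x', y', z', w} = y'))
    {x y z : X} {U : Finset X} (hcard : U.card = n)
    (hyU : y ∈ U) (hUy : C U = y) :
    ∀ (m : ℕ) (a c : X) (A : Finset X), A ⊆ U → (∀ u ∈ A, RBar C c u) → n ≤ A.card + m →
      a ∈ U → c ∈ U →
      pc C a y → pc C c a → pc C c y → RBar C c a → RBar C c y →
      C (U.erase c) = a → C {a, y, c} = c →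
      ((a = x ∧ c = z) ∨ RBar C a y) →
      ∃ w, C {x, y, w} = x ∧ C {x, y, z, w} = y := by
  intro m
  induction m with
  | zero =>
    intro a c A hAU hAdom hfuel _ hcU _ _ _ _ _ _ _ _
    have hAeq : A = U := Finset.eq_of_subset_of_card_le hAU (by omega)
    exact absurd (hAdom c (hAeq ▸ hcU)) (rbar_irrefl_s5 h3 c)
  | succ m ihm =>
    intro a c A hAU hAdom hfuel haU hcU pcay pcca pccy hcda hcdy hVa hTc hflag
    have hcy : c ≠ y := pccy.1
    obtain ⟨N, hNU, ⟨hyN, hcN, hNy⟩, hNmin⟩ := exists_minimal_menu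
      (fun M => y ∈ M ∧ c ∈ M ∧ C M = y) (Finset.Subset.refl U) ⟨hyU, hcU, hUy⟩
    have hssN : ({c, y} : Finset X) ⊂ N := by
      rw [Finset.ssubset_iff_subset_ne]
      constructor
      · intro u hu; simp only [Finset.mem_insert, Finset.mem_singleton] at hu
        rcases hu with rfl | rfl; exacts [hcN, hyN]
      · intro h
        rw [← h, pccy.2] at hNy
        exact hcy hNy
    obtain ⟨w', hw'N, hw'c, hw'y, hvalN⟩ := h2 c y N hcy hssN (Or.inr hNy)
    have hvc : C (N.erase w') = c := by
      rcases hvalN with h | h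
      · exact h
      · exfalso
        have hle := hNmin (N.erase w') ((Finset.erase_subset w' N).trans hNU)
          ⟨Finset.mem_erase.mpr ⟨fun hh => hw'y hh.symm, hyN⟩,
           Finset.mem_erase.mpr ⟨fun hh => hw'c hh.symm, hcN⟩, h⟩
        rw [Finset.card_erase_of_mem hw'N] at hle
        have hpos : 0 < N.card := Finset.card_pos.mpr ⟨w', hw'N⟩
        omega
    have hrevN : Rev C c y w' (N.erase w') := by
      refine ⟨hcy, Finset.mem_erase.mpr ⟨fun hh => hw'c hh.symm, hcN⟩,
        Finset.mem_erase.mpr ⟨fun hh => hw'y hh.symm, hyN⟩, Finset.notMem_erase w' N,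
        pccy.2, hvc, by rw [Finset.insert_erase hw'N]; exact hNy⟩
    have hw'U : w' ∈ U := hNU hw'N
    rcases pc_total hC (show c ≠ w' from fun h => hw'c h.symm) with hpcw | hpwc
    · -- Zw case : y ≻̄ w'
      have hydw : RBar C y w' := rbar_weak2 ⟨hrevN, hpcw⟩
      by_cases hw'a : w' = a
      · exact ((pc_asymm_s5 pcay) (h3 y a (hw'a ▸ hydw))).elim
      · obtain ⟨v, hv1, hv2⟩ := zwSub C hC h1 h2 h3 h4 pcay pcca hpcw hcda hcdy hydw
          haU hyU hcU hw'U hw'a hw'y hw'c hUy hVa hTc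
        rcases hflag with ⟨hax, hcz⟩ | hady
        · rw [hax] at hv1 hv2
          rw [hcz] at hv2
          exact ⟨v, hv1, hv2⟩
        · exact (killer C hC h1 h3 h4 pcay pccy (fun h => pcca.1 h.symm)
            hady hcdy hTc hv1 hv2).elim
    · -- Zs case : w' ≻̄ c
      have hwdc : RBar C w' c := rbar_strong ⟨hrevN, hpwc⟩
      have hwdy : RBar C w' y := hwdc.trans hcdy
      by_cases hNUeq : N = U
      · rw [hNUeq] at hvc hrevN
        have hsrU : StrongRev C c y w' (U.erase w') := ⟨hrevN, hpwc⟩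
        have hm := hC {c, y, w'} ⟨c, by simp⟩
        simp only [Finset.mem_insert, Finset.mem_singleton] at hm
        rcases hm with hv | hv | hv
        · exact (paramX C hC h1 h2 h3 h4 IH hsrU (Finset.insert_erase hw'U).symm hcard hv).elim
        · exfalso
          obtain ⟨u, hu, huy, hval⟩ := nc_victim h1 (show y ∈ ({c, y, w'} : Finset X) by simp)
            hv (show c ∈ ({c, y, w'} : Finset X) by simp) hcy
          simp only [Finset.mem_insert, Finset.mem_singleton] at hu
          rcases hu with h | h | h
          · rw [h, Finset.pair_comm, pccy.2] at hval
            exact hcy hval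
          · exact huy h
          · rw [h] at hval
            exact (pc_asymm_s5 (h3 w' y hwdy)) ⟨fun hh => hw'y hh.symm, hval⟩
        · -- recurse
          have hcA : c ∉ A := fun hcA => rbar_irrefl_s5 h3 c (hAdom c hcA)
          refine ihm c w' (insert c A) (Finset.insert_subset hcU hAU) ?_ ?_
            hcU hw'U pccy hpwc (h3 w' y hwdy) hwdc hwdy hvc hv (Or.inr hcdy)
          · intro u hu
            rcases Finset.mem_insert.mp hu with rfl | hu'
            · exact hwdc
            · exact hwdc.trans (hAdom u hu')
          · rw [Finset.card_insert_of_notMem hcA]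
            omega
      · -- N ⊊ U : IH on smaller strong reversal
        have hcard' : (insert w' (N.erase w')).card < n := by
          rw [Finset.insert_erase hw'N, ← hcard]
          exact Finset.card_lt_card (Finset.ssubset_iff_subset_ne.mpr ⟨hNU, hNUeq⟩)
        rcases IH c y w' (N.erase w') ⟨hrevN, hpwc⟩ hcard' with
          ⟨-, hyw', -, -⟩ | ⟨-, -, h5', v, h6', h7'⟩
        · exact ((pc_asymm_s5 (h3 w' y hwdy)) hyw').elim
        · exact (killer C hC h1 h3 h4 pccy (h3 w' y hwdy)
            (fun h => hw'c h.symm) hcdy hwdy h5' h6' h7').elim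

end LoopZ

/-- If `C` satisfies NC, WCC*, NBC*, and R-WARP, then `C` satisfies the
Small Menu Property. -/
theorem axioms_smp {X : Type*} [Fintype X] [DecidableEq X]
    (C : Finset X → X) (hC : IsChoice C)
    (h1 : NC C) (h2 : WCCstar C) (h3 : NBCstar C) (h4 : RWARP C) :
    SMP C := by
  constructor
  · -- Part (i) : weak reversals
    rintro x y z S ⟨⟨hxy, hxS, hyS, hzS, hpair, hSx, hUy⟩, hpxz⟩
    have pcxy : pc C x y := ⟨hxy, hpair⟩
    have hzx : z ≠ x := fun h => hzS (h ▸ hxS)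
    have hzy : z ≠ y := fun h => hzS (h ▸ hyS)
    have hw : WeakRev C x y z S := ⟨⟨hxy, hxS, hyS, hzS, hpair, hSx, hUy⟩, hpxz⟩
    have hDxy : RBar C x y := rbar_weak1 hw
    have hDyz : RBar C y z := rbar_weak2 hw
    have pcyz : pc C y z := h3 y z hDyz
    refine ⟨pcxy, pcyz, ?_⟩
    have hm := hC {x, y, z} ⟨x, by simp⟩
    simp only [Finset.mem_insert, Finset.mem_singleton] at hm
    rcases hm with h | h | h
    · exact absurd h (h4 y x (insert z S) {x, y, z} (fun hh => hxy hh.symm)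
        (Finset.mem_insert_of_mem hyS) (Finset.mem_insert_of_mem hxS) (by simp) (by simp)
        (notMin_dom hDxy (Finset.mem_insert_of_mem hyS)) hUy (notMin_dom hDyz (by simp)))
    · exact h
    · exfalso
      refine h1 {x, y, z} z (by simp) ⟨x, by simp, fun hh => hzx hh.symm⟩ ?_ h
      intro u hu huz
      simp only [Finset.mem_insert, Finset.mem_singleton] at hu
      rcases hu with hh | hh | hh
      · rw [hh, Finset.pair_comm z x, hpxz.2]
        exact fun he => hzx he.symm
      · rw [hh, Finset.pair_comm z y, pcyz.2]
        exact fun he => hzy he.symm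
      · exact (huz hh).elim
  · -- Part (ii) : strong reversals
    have MAIN : ∀ n : ℕ, ∀ x y z : X, ∀ S : Finset X, StrongRev C x y z S →
        (insert z S).card = n →
        (pc C x y ∧ pc C y z ∧ pc C z x ∧ C {x, y, z} = y) ∨
        (pc C z x ∧ pc C x y ∧ C {x, y, z} = z ∧
          ∃ w : X, C {x, y, w} = x ∧ C {x, y, z, w} = y) := by
      intro n
      induction n using Nat.strong_induction_on with
      | _ n IH =>
        intro x y z S hsr hcard
        have IH' : ∀ x' y' z' : X, ∀ S' : Finset X, StrongRev C x' y' z' S' →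
            (insert z' S').card < n →
            (pc C x' y' ∧ pc C y' z' ∧ pc C z' x' ∧ C {x', y', z'} = y') ∨
            (pc C z' x' ∧ pc C x' y' ∧ C {x', y', z'} = z' ∧
              ∃ w, C {x', y', w} = x' ∧ C {x', y', z', w} = y') :=
          fun x' y' z' S' h hlt => IH _ hlt x' y' z' S' h rfl
        obtain ⟨⟨hxy, hxS, hyS, hzS, hpair, hSx, hUy⟩, hpzx⟩ := hsr
        have pcxy : pc C x y := ⟨hxy, hpair⟩
        have hzx : z ≠ x := fun h => hzS (h ▸ hxS)
        have hzy : z ≠ y := fun h => hzS (h ▸ hyS)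
        have hDzx : RBar C z x := rbar_strong ⟨⟨hxy, hxS, hyS, hzS, hpair, hSx, hUy⟩, hpzx⟩
        have hxU : x ∈ insert z S := Finset.mem_insert_of_mem hxS
        have hyU : y ∈ insert z S := Finset.mem_insert_of_mem hyS
        have hzU : z ∈ insert z S := Finset.mem_insert_self z S
        have hm := hC {x, y, z} ⟨x, by simp⟩
        simp only [Finset.mem_insert, Finset.mem_singleton] at hm
        rcases hm with h | h | h
        · -- C {x,y,z} = x : contradiction by paramX
          exact (paramX C hC h1 h2 h3 h4 IH'
            ⟨⟨hxy, hxS, hyS, hzS, hpair, hSx, hUy⟩, hpzx⟩ rfl hcard h).elim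
        · -- C {x,y,z} = y : first disjunct
          left
          refine ⟨pcxy, ?_, hpzx, h⟩
          obtain ⟨u, hu, huy, hval⟩ := nc_victim h1 (show y ∈ ({x, y, z} : Finset X) by simp)
            h (show x ∈ ({x, y, z} : Finset X) by simp) hxy
          simp only [Finset.mem_insert, Finset.mem_singleton] at hu
          rcases hu with hh | hh | hh
          · rw [hh, Finset.pair_comm y x, hpair] at hval
            exact (hxy hval).elim
          · exact (huy hh).elim
          · rw [hh] at hval
            exact ⟨fun he => hzy he.symm, hval⟩
        · -- C {x,y,z} = z : second disjunct via the loop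
          right
          have hyz : y ≠ z := fun hh => hzy hh.symm
          have pczy : pc C z y := by
            rcases pc_total hC hyz with hpyz | h'
            · exfalso
              have hrev : Rev C y z x {y, z} := by
                refine ⟨hyz, by simp, by simp, ?_, hpyz.2, hpyz.2, ?_⟩
                · simp only [Finset.mem_insert, Finset.mem_singleton]; push_neg
                  exact ⟨hxy, fun hh => hzx hh.symm⟩
                · rw [show (insert x {y, z} : Finset X) = {x, y, z} by
                    ext u; simp only [Finset.mem_insert, Finset.mem_singleton]; try tauto]
                  exact h
              have hDxy : RBar C x y := rbar_strong ⟨hrev, pcxy⟩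
              exact pc_asymm_s5 hpyz (h3 z y (hDzx.trans hDxy))
            · exact h'
          have hDzy : RBar C z y := by
            by_contra hn
            refine (h4 y z (insert z S) {y, z} hyz hyU hzU (by simp) (by simp)
              (notMin_dom hDzx hxU) hUy ?_) (by rw [Finset.pair_comm]; exact pczy.2)
            rintro ⟨-, ⟨u, hu, hud⟩, -⟩
            simp only [Finset.mem_insert, Finset.mem_singleton] at hu
            rcases hu with hh | hh
            · exact rbar_irrefl_s5 h3 y (hh ▸ hud)
            · exact hn (hh ▸ hud)
          obtain ⟨w, hw1, hw2⟩ := loopZ C hC h1 h2 h3 h4 IH' hcard hyU hUy n x z ∅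
            (Finset.empty_subset _) (by simp) (by simp) hxU hzU pcxy hpzx pczy hDzx hDzy
            (by rw [Finset.erase_insert hzS]; exact hSx) h (Or.inl ⟨rfl, rfl⟩)
          exact ⟨hpzx, pcxy, h, w, hw1, hw2⟩
    intro x y z S hsr
    exact MAIN _ x y z S hsr rfl
end

section
/- If C and C̄ are two CBR-representable choice functions on the same finite set X, then C(S) = C̄(S) for every nonempty menu S if and only if C(S) = C̄(S) for every menu S with |S| ≤ 3. -/
set_option linter.unusedSectionVars false
set_option maxHeartbeats 1000000

section Helpers
variable {X : Type*} [DecidableEq X] {C : Finset X → X} {R P : X → X → Prop}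

lemma cbr_spec (h : CBR C R P) {S : Finset X} (hS : S.Nonempty) :
    Short R S (C S) ∧ ∀ z : X, Short R S z → ¬ P z (C S) :=
  (h.2.2.2.2 S hS (C S)).mpr rfl

lemma cbr_mem (h : CBR C R P) {S : Finset X} (hS : S.Nonempty) : C S ∈ S :=
  (cbr_spec h hS).1.1

lemma cbr_eq (h : CBR C R P) {S : Finset X} (hS : S.Nonempty) {x : X}
    (h1 : Short R S x) (h2 : ∀ z : X, Short R S z → ¬ P z x) : C S = x :=
  ((h.2.2.2.2 S hS x).mp ⟨h1, h2⟩).symm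

lemma cbr_pmax (h : CBR C R P) {S : Finset X} (hS : S.Nonempty) {z : X}
    (hz : Short R S z) (hne : z ≠ C S) : P (C S) z := by
  have h2 := (cbr_spec h hS).2 z hz
  rcases h.2.2.2.1 (C S) z (Ne.symm hne) with h' | h'
  · exact h'
  · exact absurd h' h2

lemma asym_irrefl {Q : X → X → Prop} (h : Asym Q) (x : X) : ¬ Q x x := fun hx => h x x hx hx

lemma mem_pair_left (x y : X) : x ∈ ({x, y} : Finset X) := Finset.mem_insert_self x {y}
lemma mem_pair_right (x y : X) : y ∈ ({x, y} : Finset X) := by simp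

lemma pair_of_R (h : CBR C R P) {x y : X} (hxy : R x y) : C {x, y} = x := by
  have hR := h.1
  apply cbr_eq h ⟨x, mem_pair_left x y⟩
  · exact ⟨mem_pair_left x y, fun hm => hm.2.2 y (mem_pair_right x y) hxy⟩
  · intro z hz
    rcases Finset.mem_insert.mp hz.1 with h1 | h1
    · subst h1; exact fun hp => h.2.2.1 z z hp hp
    · rw [Finset.mem_singleton] at h1; subst h1
      exfalso
      refine hz.2 ⟨hz.1, ⟨x, mem_pair_left x z, hxy⟩, ?_⟩
      intro u hu
      rcases Finset.mem_insert.mp hu with h2 | h2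
      · subst h2; exact hR u z hxy
      · rw [Finset.mem_singleton] at h2; subst h2; exact asym_irrefl hR u

lemma pair_rev (h : CBR C R P) {x y : X} (hxy : x ≠ y) (hc : C {x, y} = x) :
    ¬ R y x ∧ (R x y ∨ P x y) := by
  have hsp := cbr_spec h (⟨x, mem_pair_left x y⟩ : ({x, y} : Finset X).Nonempty)
  rw [hc] at hsp
  constructor
  · intro hyx
    refine hsp.1.2 ⟨mem_pair_left x y, ⟨y, mem_pair_right x y, hyx⟩, ?_⟩
    intro u hu
    rcases Finset.mem_insert.mp hu with h4 | h4
    · subst h4; exact asym_irrefl h.1 u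
    · rw [Finset.mem_singleton] at h4; subst h4; exact h.1 u x hyx
  · by_cases hxy' : R x y
    · exact Or.inl hxy'
    · right
      have hys : Short R {x, y} y := by
        refine ⟨mem_pair_right x y, fun hm => ?_⟩
        rcases hm.2.1 with ⟨z, hzm, hzy⟩
        rcases Finset.mem_insert.mp hzm with h4 | h4
        · subst h4; exact hxy' hzy
        · rw [Finset.mem_singleton] at h4; subst h4; exact asym_irrefl h.1 z hzy
      have := hsp.2 y hys
      rcases h.2.2.2.1 x y hxy with h' | h'
      · exact h'
      · exact absurd h' this

lemma erase_ne (h : CBR C R P) {S : Finset X} {x c : X} (hx : x ∈ S) (hxc : x ≠ c)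
    (hsh : ¬ MinSet R (S.erase c) x) (hmax : ∀ z, Short R S z → z ≠ x → P x z) :
    C (S.erase c) = x ∨ (MinSet R S (C (S.erase c)) ∧
      (∀ z ∈ S, R z (C (S.erase c)) → z = c) ∧ P (C (S.erase c)) x) := by
  have hxT : x ∈ S.erase c := Finset.mem_erase.mpr ⟨hxc, hx⟩
  have hTne : (S.erase c).Nonempty := ⟨x, hxT⟩
  by_cases htx : C (S.erase c) = x
  · exact Or.inl htx
  · right
    have hsp := cbr_spec h hTne
    have htS : C (S.erase c) ∈ S := Finset.mem_of_mem_erase hsp.1.1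
    have hnpx : ¬ P x (C (S.erase c)) := hsp.2 x ⟨hxT, hsh⟩
    by_cases hmin : MinSet R S (C (S.erase c))
    · have hdom : ∀ z ∈ S, R z (C (S.erase c)) → z = c := by
        intro z hz hzt
        by_contra hzc
        exact hsp.1.2 ⟨hsp.1.1, ⟨z, Finset.mem_erase.mpr ⟨hzc, hz⟩, hzt⟩,
          fun u hu => hmin.2.2 u (Finset.mem_of_mem_erase hu)⟩
      have hpt : P (C (S.erase c)) x := by
        rcases h.2.2.2.1 (C (S.erase c)) x htx with h' | h'
        · exact h'
        · exact absurd h' hnpx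
      exact ⟨hmin, hdom, hpt⟩
    · exact absurd (hmax _ ⟨htS, hmin⟩ htx) hnpx

lemma erase_min (h : CBR C R P) {S : Finset X} (hS : S.Nonempty) {f : X}
    (hf : MinSet R S f) (hcf : ¬ R (C S) f) : C (S.erase f) = C S := by
  have hsp := cbr_spec h hS
  have haS : C S ∈ S := hsp.1.1
  have haf : C S ≠ f := by intro h'; exact hsp.1.2 (h' ▸ hf)
  have haT : C S ∈ S.erase f := Finset.mem_erase.mpr ⟨haf, haS⟩
  apply cbr_eq h ⟨C S, haT⟩
  · refine ⟨haT, fun hm => ?_⟩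
    refine hsp.1.2 ⟨haS, ?_, ?_⟩
    · rcases hm.2.1 with ⟨z, hz, hza⟩
      exact ⟨z, Finset.mem_of_mem_erase hz, hza⟩
    · intro u hu
      by_cases huf : u = f
      · subst huf; exact hcf
      · exact hm.2.2 u (Finset.mem_erase.mpr ⟨huf, hu⟩)
  · intro z hz
    have hzS : z ∈ S := Finset.mem_of_mem_erase hz.1
    by_cases hmin : MinSet R S z
    · exfalso
      refine hz.2 ⟨hz.1, ?_, fun u hu => hmin.2.2 u (Finset.mem_of_mem_erase hu)⟩
      rcases hmin.2.1 with ⟨w, hw, hwz⟩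
      have hwf : w ≠ f := by rintro rfl; exact hf.2.2 z hzS hwz
      exact ⟨w, Finset.mem_erase.mpr ⟨hwf, hw⟩, hwz⟩
    · by_cases hza : z = C S
      · subst hza; exact asym_irrefl h.2.2.1 _
      · exact h.2.2.1 _ z (cbr_pmax h hS ⟨hzS, hmin⟩ hza)

lemma exA (h : CBR C R P) {S : Finset X} (hS : S.Nonempty) {c : X}
    (hmin : MinSet R (S.erase c) (C S)) :
    R (C S) c ∧ (∀ z ∈ S, R (C S) z → z = c) ∧ ∃ w ∈ S, w ≠ c ∧ R w (C S) := by
  have hsp := cbr_spec h hS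
  have haS : C S ∈ S := hsp.1.1
  rcases hmin.2.1 with ⟨w, hw, hwa⟩
  have hwS : w ∈ S := Finset.mem_of_mem_erase hw
  have hwc : w ≠ c := (Finset.mem_erase.mp hw).1
  have hsub : ∀ z ∈ S, R (C S) z → z = c := by
    intro z hz haz
    by_contra hzc
    exact hmin.2.2 z (Finset.mem_erase.mpr ⟨hzc, hz⟩) haz
  have hac : R (C S) c := by
    by_contra hac
    refine hsp.1.2 ⟨haS, ⟨w, hwS, hwa⟩, fun u hu hau => ?_⟩
    exact hac ((hsub u hu hau) ▸ hau)
  exact ⟨hac, hsub, w, hwS, hwc, hwa⟩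

end Helpers

lemma key {X : Type*} [DecidableEq X] (C C' : Finset X → X) (R P R' P' : X → X → Prop)
    (hC : CBR C R P) (hC' : CBR C' R' P') (S : Finset X) (hS : S.Nonempty)
    (AG : ∀ T : Finset X, T.Nonempty → T.card < S.card → C T = C' T)
    (hcard : 4 ≤ S.card) (hne : C S ≠ C' S) (hp : C {C S, C' S} = C S) : False := by
  have hRa := hC.1
  have hRt := hC.2.1
  have hPa := hC.2.2.1
  have hR'a := hC'.1
  have hR't := hC'.2.1
  have hP'a := hC'.2.2.1
  set a := C S with ha
  set b := C' S with hb
  have hab : a ≠ b := hne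
  have haS : a ∈ S := cbr_mem hC hS
  have hbS : b ∈ S := cbr_mem hC' hS
  have AG2 : ∀ x y : X, C {x, y} = C' {x, y} := by
    intro x y
    have h2 : ({x, y} : Finset X).card ≤ 2 :=
      le_trans (Finset.card_insert_le x {y}) (by simp)
    exact AG _ ⟨x, mem_pair_left x y⟩ (by omega)
  have AGer : ∀ c ∈ S, C (S.erase c) = C' (S.erase c) := by
    intro c hc
    have h1 : (S.erase c).card = S.card - 1 := Finset.card_erase_of_mem hc
    exact AG _ (Finset.card_pos.mp (by omega)) (by omega)
  have F1 := pair_rev hC hab hp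
  have F2 : ¬ R' b a ∧ (R' a b ∨ P' a b) :=
    pair_rev hC' hab ((AG2 a b).symm.trans hp)
  have pm : ∀ z, Short R S z → z ≠ a → P a z := fun z hz hzne => cbr_pmax hC hS hz hzne
  have pm' : ∀ z, Short R' S z → z ≠ b → P' b z := fun z hz hzne => cbr_pmax hC' hS hz hzne
  -- Classification of elements of S \ {a, b}
  have CL : ∀ c ∈ S, c ≠ a → c ≠ b →
      MinSet R (S.erase c) a ∨ MinSet R' (S.erase c) b ∨
      (MinSet R' S a ∧ (∀ z ∈ S, R' z a → z = c) ∧ P' a b) := by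
    intro c hcS hca hcb
    by_cases h1 : MinSet R (S.erase c) a
    · exact Or.inl h1
    by_cases h2 : MinSet R' (S.erase c) b
    · exact Or.inr (Or.inl h2)
    right; right
    have hth := erase_ne hC haS (Ne.symm hca) h1 pm
    have hth' := erase_ne hC' hbS (Ne.symm hcb) h2 pm'
    have hAGc := AGer c hcS
    rcases hth with hta | ⟨hmint, hdomt, hpta⟩
    · rcases hth' with htb | ⟨hmint', hdomt', hptb⟩
      · exact absurd (hta.symm.trans (hAGc.trans htb)) hab
      · rw [← hAGc, hta] at hmint' hdomt' hptb
        exact ⟨hmint', hdomt', hptb⟩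
    · rcases hth' with htb | ⟨hmint', hdomt', hptb⟩
      · rw [hAGc, htb] at hmint hdomt hpta
        have hnab : ¬ R a b := fun h' => hca (hdomt a haS h').symm
        have hPab : P a b := F1.2.resolve_left hnab
        exact absurd hpta (hPa a b hPab)
      · rw [← hAGc] at hmint' hdomt' hptb
        have hnat : ¬ R a (C (S.erase c)) := fun h' => hca (hdomt a haS h').symm
        have hnbt : ¬ R' b (C (S.erase c)) := fun h' => hcb (hdomt' b hbS h').symm
        have e1 : C (S.erase (C (S.erase c))) = a := erase_min hC hS hmint hnat
        have e2 : C' (S.erase (C (S.erase c))) = b := erase_min hC' hS hmint' hnbt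
        have hAG2 := AGer _ hmint.1
        exact absurd (e1.symm.trans (hAG2.trans e2)) hab
  -- the two bad types are unique
  by_cases hGA : ∃ c, c ∈ S ∧ c ≠ a ∧ c ≠ b ∧ MinSet R' S a ∧ (∀ z ∈ S, R' z a → z = c) ∧ P' a b
  · -- CASE I
    obtain ⟨γ, hγS, hγa, hγb, hminA', hdomγ', hP'ab⟩ := hGA
    have hR'γa : R' γ a := by
      rcases hminA'.2.1 with ⟨z, hz, hza⟩
      rwa [hdomγ' z hz hza] at hza
    have hsub'a : ∀ z ∈ S, ¬ R' a z := hminA'.2.2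
    by_cases hIB : MinSet R (S.erase b) a
    · -- CASE I.B
      obtain ⟨hRab, hsubab, w, hwS, hwb, hRwa⟩ := exA hC hS hIB
      have hsubb : ∀ z ∈ S, ¬ R b z := by
        intro z hz hbz
        have h' : R a z := hRt a b z hRab hbz
        exact asym_irrefl hRa b ((hsubab z hz h') ▸ hbz)
      have hwa : w ≠ a := by rintro rfl; exact asym_irrefl hRa _ hRwa
      have hnotA : ∀ d ∈ S, d ≠ b → ¬ MinSet R (S.erase d) a := by
        intro d hd hdb hmind
        obtain ⟨hRad, -, -⟩ := exA hC hS hmind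
        exact hdb (hsubab d hd hRad)
      -- classify w
      rcases CL w hwS hwa hwb with h | h | h
      · exact hnotA w hwS hwb h
      · -- badB w : contradiction via the pair {w, b}
        obtain ⟨hR'bw, hsub'bw, -⟩ := exA hC' hS h
        have hRwb : R w b := hRt w a b hRwa hRab
        have e1 : C {w, b} = w := pair_of_R hC hRwb
        have e2 : C' {b, w} = b := pair_of_R hC' hR'bw
        rw [Finset.pair_comm b w] at e2
        exact hwb ((e1.symm.trans (AG2 w b)).trans e2)
      · -- GA w : w = γ, so R γ a
        have hwγ : w = γ := (h.2.1 γ hγS hR'γa).symm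
        subst hwγ
        -- every other element of S \ {a,b} is badB
        have hBB : ∀ d ∈ S, d ≠ a → d ≠ b → d ≠ w → MinSet R' (S.erase d) b := by
          intro d hd hda hdb hdw
          rcases CL d hd hda hdb with h' | h' | h'
          · exact absurd h' (hnotA d hd hdb)
          · exact h'
          · exact absurd (h'.2.1 w hwS hR'γa).symm hdw
        -- get a second element β of S \ {a, b}
        have hDsub : ({a, b} : Finset X) ⊆ S :=
          Finset.insert_subset_iff.mpr ⟨haS, Finset.singleton_subset_iff.mpr hbS⟩
        have hDcard : 1 < (S \ {a, b}).card := by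
          rw [Finset.card_sdiff_of_subset hDsub, Finset.card_pair hab]; omega
        obtain ⟨β, hβD, hβw⟩ := Finset.exists_mem_ne hDcard w
        have hβS : β ∈ S := (Finset.mem_sdiff.mp hβD).1
        have hβab := (Finset.mem_sdiff.mp hβD).2
        rw [Finset.mem_insert, Finset.mem_singleton] at hβab
        push_neg at hβab
        obtain ⟨hβa, hβb⟩ := hβab
        have hminβ : MinSet R' (S.erase β) b := hBB β hβS hβa hβb hβw
        obtain ⟨hR'bβ, hsub'b, -⟩ := exA hC' hS hminβ
        have hSmem : ∀ z ∈ S, z = a ∨ z = b ∨ z = w ∨ z = β := by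
          intro z hz
          by_cases h1 : z = a
          · exact Or.inl h1
          by_cases h2 : z = b
          · exact Or.inr (Or.inl h2)
          by_cases h3 : z = w
          · exact Or.inr (Or.inr (Or.inl h3))
          obtain ⟨hR'bz, -, -⟩ := exA hC' hS (hBB z hz h1 h2 h3)
          exact Or.inr (Or.inr (Or.inr (hsub'b z hz hR'bz)))
        have hShortγ : Short R S w := ⟨hwS, fun hm => hm.2.2 a haS hRwa⟩
        have hPaγ : P a w := cbr_pmax hC hS hShortγ hwa
        -- C (S.erase β) = a
        have haβ : a ≠ β := Ne.symm hβa
        have hbβ : b ≠ β := Ne.symm hβb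
        have key1 : C (S.erase β) = a := by
          apply cbr_eq hC ⟨a, Finset.mem_erase.mpr ⟨haβ, haS⟩⟩
          · exact ⟨Finset.mem_erase.mpr ⟨haβ, haS⟩,
              fun hm => hm.2.2 b (Finset.mem_erase.mpr ⟨hbβ, hbS⟩) hRab⟩
          · intro z hz
            have hzS : z ∈ S := Finset.mem_of_mem_erase hz.1
            rcases hSmem z hzS with h1 | h1 | h1 | h1
            · subst h1; exact asym_irrefl hPa _
            · subst h1
              exact absurd ⟨hz.1, ⟨a, Finset.mem_erase.mpr ⟨haβ, haS⟩, hRab⟩,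
                fun u hu => hsubb u (Finset.mem_of_mem_erase hu)⟩ hz.2
            · subst h1; exact hPa a z hPaγ
            · subst h1; exact absurd rfl (Finset.mem_erase.mp hz.1).1
        have key2 : C' (S.erase β) = a := (AGer β hβS).symm.trans key1
        have hsp2 := cbr_spec hC' (⟨a, Finset.mem_erase.mpr ⟨haβ, haS⟩⟩ :
          (S.erase β).Nonempty)
        rw [key2] at hsp2
        refine hsp2.1.2 ⟨Finset.mem_erase.mpr ⟨haβ, haS⟩,
          ⟨w, Finset.mem_erase.mpr ⟨Ne.symm hβw, hwS⟩, hR'γa⟩,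
          fun u hu => hsub'a u (Finset.mem_of_mem_erase hu)⟩
    · -- CASE I.A
      have hth := erase_ne hC haS hab hIB pm
      have hAGb := AGer b hbS
      have haeb : a ∈ S.erase b := Finset.mem_erase.mpr ⟨hab, haS⟩
      have hne_a : C' (S.erase b) ≠ a := by
        intro h'
        have hsp2 := cbr_spec hC' (⟨a, haeb⟩ : (S.erase b).Nonempty)
        rw [h'] at hsp2
        exact hsp2.1.2 ⟨haeb, ⟨γ, Finset.mem_erase.mpr ⟨hγb, hγS⟩, hR'γa⟩,
          fun u hu => hsub'a u (Finset.mem_of_mem_erase hu)⟩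
      rcases hth with hta | ⟨hmint, hdomt, hpta⟩
      · exact hne_a (hAGb ▸ hta)
      · have htS : C (S.erase b) ∈ S := hmint.1
        have hta : C (S.erase b) ≠ a := by
          intro h'
          rw [h'] at hpta
          exact asym_irrefl hPa a hpta
        have hnat : ¬ R a (C (S.erase b)) := fun h' => hab (hdomt a haS h')
        have e1 : C (S.erase (C (S.erase b))) = a := erase_min hC hS hmint hnat
        have hγt : γ = C (S.erase b) := by
          by_contra hγt
          have e2 : C' (S.erase (C (S.erase b))) = a := (AGer _ htS).symm.trans e1
          have han : a ≠ C (S.erase b) := Ne.symm hta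
          have hsp2 := cbr_spec hC' (⟨a, Finset.mem_erase.mpr ⟨han, haS⟩⟩ :
            (S.erase (C (S.erase b))).Nonempty)
          rw [e2] at hsp2
          exact hsp2.1.2 ⟨Finset.mem_erase.mpr ⟨han, haS⟩,
            ⟨γ, Finset.mem_erase.mpr ⟨hγt, hγS⟩, hR'γa⟩,
            fun u hu => hsub'a u (Finset.mem_of_mem_erase hu)⟩
        rw [← hγt] at hmint hdomt hpta
        -- now : MinSet R S γ, dominators of γ = {b}, P γ a
        have hRbγ : R b γ := by
          rcases hmint.2.1 with ⟨z, hz, hzγ⟩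
          rwa [hdomt z hz hzγ] at hzγ
        have hsubγ : ∀ z ∈ S, ¬ R γ z := hmint.2.2
        -- pick d ∈ S \ {a,b}, d ≠ γ
        have hDsub : ({a, b} : Finset X) ⊆ S :=
          Finset.insert_subset_iff.mpr ⟨haS, Finset.singleton_subset_iff.mpr hbS⟩
        have hDcard : 1 < (S \ {a, b}).card := by
          rw [Finset.card_sdiff_of_subset hDsub, Finset.card_pair hab]; omega
        obtain ⟨d, hdD, hdγ⟩ := Finset.exists_mem_ne hDcard γ
        have hdS : d ∈ S := (Finset.mem_sdiff.mp hdD).1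
        have hdab := (Finset.mem_sdiff.mp hdD).2
        rw [Finset.mem_insert, Finset.mem_singleton] at hdab
        push_neg at hdab
        obtain ⟨hda, hdb⟩ := hdab
        by_cases hdA : MinSet R (S.erase d) a
        · -- CASE I.A.1
          obtain ⟨hRad, hsubad, w, hwS, hwd, hRwa⟩ := exA hC hS hdA
          have hwa : w ≠ a := by rintro rfl; exact asym_irrefl hRa _ hRwa
          have hwb : w ≠ b := by rintro rfl; exact F1.1 hRwa
          have hwγ : w ≠ γ := by rintro rfl; exact hsubγ a haS hRwa
          rcases CL w hwS hwa hwb with h | h | h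
          · obtain ⟨-, hsubaw, -⟩ := exA hC hS h
            exact hwd ((hsubad w hwS (exA hC hS h).1).symm ▸ rfl) |>.elim
          · -- badB w
            obtain ⟨hR'bw, hsub'bw, -⟩ := exA hC' hS h
            have hshw : ¬ MinSet R (S.erase w) a := fun hm =>
              hm.2.2 d (Finset.mem_erase.mpr ⟨Ne.symm hwd, hdS⟩) hRad
            have hthw := erase_ne hC haS (Ne.symm hwa) hshw pm
            have hAGw := AGer w hwS
            have haew : a ∈ S.erase w := Finset.mem_erase.mpr ⟨Ne.symm hwa, haS⟩
            have hne_a_w : C' (S.erase w) ≠ a := by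
              intro h'
              have hsp2 := cbr_spec hC' (⟨a, haew⟩ : (S.erase w).Nonempty)
              rw [h'] at hsp2
              exact hsp2.1.2 ⟨haew, ⟨γ, Finset.mem_erase.mpr ⟨Ne.symm hwγ, hγS⟩, hR'γa⟩,
                fun u hu => hsub'a u (Finset.mem_of_mem_erase hu)⟩
            rcases hthw with h' | ⟨hming, hdomg, hpga⟩
            · exact hne_a_w (hAGw ▸ h')
            · have hgS : C (S.erase w) ∈ S := hming.1
              have hga : C (S.erase w) ≠ a := by
                intro h''
                rw [h''] at hpga
                exact asym_irrefl hPa a hpga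
              have hgb : C (S.erase w) ≠ b := by
                intro h''
                have hnab : ¬ R a b := by
                  intro h3
                  rw [← h''] at h3
                  exact hwa (hdomg a haS h3).symm
                have hPab : P a b := F1.2.resolve_left hnab
                rw [h''] at hpga
                exact hPa a b hPab hpga
              have hgw : C (S.erase w) ≠ w := by
                intro h''
                rcases hming.2.1 with ⟨z, hz, hzg⟩
                have hzw := hdomg z hz hzg
                rw [hzw, h''] at hzg
                exact asym_irrefl hRa w hzg
              have hgγ : C (S.erase w) ≠ γ := by
                intro h''
                rw [← h''] at hRbγ
                exact hwb (hdomg b hbS hRbγ).symm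
              have hgd : C (S.erase w) ≠ d := by
                intro h''
                rw [← h''] at hRad
                exact hwa (hdomg a haS hRad).symm
              rcases CL _ hgS hga hgb with h'' | h'' | h''
              · obtain ⟨hRag, -, -⟩ := exA hC hS h''
                exact hwa (hdomg a haS hRag).symm
              · obtain ⟨hR'bg, -, -⟩ := exA hC' hS h''
                exact hgw (hsub'bw _ hgS hR'bg)
              · exact hgγ (h''.2.1 γ hγS hR'γa).symm
          · exact hwγ (h.2.1 γ hγS hR'γa).symm
        · -- CASE I.A.2
          rcases CL d hdS hda hdb with h | h | h
          · exact hdA h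
          · -- badB d
            obtain ⟨hR'bd, hsub'bd, -⟩ := exA hC' hS h
            have hthd := erase_ne hC haS (Ne.symm hda) hdA pm
            have hAGd := AGer d hdS
            have haed : a ∈ S.erase d := Finset.mem_erase.mpr ⟨Ne.symm hda, haS⟩
            have hne_a_d : C' (S.erase d) ≠ a := by
              intro h'
              have hsp2 := cbr_spec hC' (⟨a, haed⟩ : (S.erase d).Nonempty)
              rw [h'] at hsp2
              exact hsp2.1.2 ⟨haed, ⟨γ, Finset.mem_erase.mpr ⟨Ne.symm hdγ, hγS⟩, hR'γa⟩,
                fun u hu => hsub'a u (Finset.mem_of_mem_erase hu)⟩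
            have hne_b_d : C' (S.erase d) ≠ b := by
              intro h'
              have hsp2 := cbr_spec hC' (⟨a, haed⟩ : (S.erase d).Nonempty)
              rw [h'] at hsp2
              exact hsp2.1.2 h
            rcases hthd with h' | ⟨hming, hdomg, hpga⟩
            · exact hne_a_d (hAGd ▸ h')
            · have hgS : C (S.erase d) ∈ S := hming.1
              have hC'g : C' (S.erase d) = C (S.erase d) := hAGd.symm
              have hga : C (S.erase d) ≠ a := fun h'' => hne_a_d (hC'g.trans h'')
              have hgb : C (S.erase d) ≠ b := fun h'' => hne_b_d (hC'g.trans h'')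
              have hgd : C (S.erase d) ≠ d := by
                intro h''
                rcases hming.2.1 with ⟨z, hz, hzg⟩
                have hzd := hdomg z hz hzg
                rw [hzd, h''] at hzg
                exact asym_irrefl hRa d hzg
              have hgγ : C (S.erase d) ≠ γ := by
                intro h''
                rw [← h''] at hRbγ
                exact hdb (hdomg b hbS hRbγ).symm
              rcases CL _ hgS hga hgb with h'' | h'' | h''
              · obtain ⟨hRag, -, -⟩ := exA hC hS h''
                exact hda (hdomg a haS hRag).symm
              · obtain ⟨hR'bg, -, -⟩ := exA hC' hS h''
                exact hgd (hsub'bd _ hgS hR'bg)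
              · exact hgγ (h''.2.1 γ hγS hR'γa).symm
          · exact hdγ (h.2.1 γ hγS hR'γa).symm
  · -- CASE II
    have hcl2 : ∀ c ∈ S, c ≠ a → c ≠ b →
        MinSet R (S.erase c) a ∨ MinSet R' (S.erase c) b := by
      intro c hc h1 h2
      rcases CL c hc h1 h2 with h | h | h
      · exact Or.inl h
      · exact Or.inr h
      · exact absurd ⟨c, hc, h1, h2, h⟩ hGA
    have KILL : ∀ α β : X, α ∈ S → β ∈ S → α ≠ a → α ≠ b → β ≠ a → β ≠ b →
        MinSet R (S.erase α) a → MinSet R' (S.erase β) b → False := by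
      intro α β hαS hβS hαa hαb hβa hβb hA hB
      obtain ⟨hRaα, hsubA, w, hwS, hwα, hRwa⟩ := exA hC hS hA
      obtain ⟨hR'bβ, hsub'B, -⟩ := exA hC' hS hB
      have hwa : w ≠ a := by rintro rfl; exact asym_irrefl hRa _ hRwa
      have hwb : w ≠ b := by rintro rfl; exact F1.1 hRwa
      have hSmem : ∀ z ∈ S, z = a ∨ z = b ∨ z = α ∨ z = β := by
        intro z hz
        by_cases h1 : z = a
        · exact Or.inl h1
        by_cases h2 : z = b
        · exact Or.inr (Or.inl h2)
        rcases hcl2 z hz h1 h2 with h | h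
        · exact Or.inr (Or.inr (Or.inl ((exA hC hS h).2.1 α hαS hRaα).symm))
        · exact Or.inr (Or.inr (Or.inr ((exA hC' hS h).2.1 β hβS hR'bβ).symm))
      have hwβ : w = β := by
        rcases hSmem w hwS with h1 | h1 | h1 | h1
        · exact absurd h1 hwa
        · exact absurd h1 hwb
        · exact absurd h1 hwα
        · exact h1
      subst hwβ
      -- hRwa : R β a
      have hRβα : R w α := hRt _ a α hRwa hRaα
      have e1 : C {w, a} = w := pair_of_R hC hRwa
      have e2 : C' {w, a} = w := (AG2 w a).symm.trans e1
      have hpr := pair_rev hC' hwa e2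
      -- hpr : ¬ R' a β ∧ (R' β a ∨ P' β a)
      have haeb : a ∈ S.erase b := Finset.mem_erase.mpr ⟨hab, haS⟩
      have hαeb : α ∈ S.erase b := Finset.mem_erase.mpr ⟨hαb, hαS⟩
      have hβeb : w ∈ S.erase b := Finset.mem_erase.mpr ⟨hwb, hwS⟩
      have keyT : C (S.erase b) = a := by
        apply cbr_eq hC ⟨a, haeb⟩
        · exact ⟨haeb, fun hm => hm.2.2 α hαeb hRaα⟩
        · intro z hz
          have hzS : z ∈ S := Finset.mem_of_mem_erase hz.1
          rcases hSmem z hzS with h1 | h1 | h1 | h1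
          · subst h1; exact asym_irrefl hPa _
          · subst h1; exact absurd rfl (Finset.mem_erase.mp hz.1).1
          · subst h1
            refine absurd ⟨hz.1, ⟨a, haeb, hRaα⟩, fun u hu => ?_⟩ hz.2
            have huS : u ∈ S := Finset.mem_of_mem_erase hu
            rcases hSmem u huS with h2 | h2 | h2 | h2
            · subst h2; exact hRa _ _ hRaα
            · subst h2; exact absurd rfl (Finset.mem_erase.mp hu).1
            · subst h2; exact asym_irrefl hRa _
            · subst h2; exact hRa _ _ hRβα
          · subst h1
            have hShortβ : Short R S z := ⟨hzS, fun hm => hm.2.2 a haS hRwa⟩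
            exact hPa a z (cbr_pmax hC hS hShortβ hwa)
      have keyT' : C' (S.erase b) = a := (AGer b hbS).symm.trans keyT
      have hspT := cbr_spec hC' (⟨a, haeb⟩ : (S.erase b).Nonempty)
      rw [keyT'] at hspT
      by_cases hR'βa : R' w a
      · have hex : ∃ u ∈ S.erase b, R' a u := by
          by_contra h'
          push_neg at h'
          exact hspT.1.2 ⟨haeb, ⟨w, hβeb, hR'βa⟩, h'⟩
        obtain ⟨u, hu, hR'au⟩ := hex
        have huS : u ∈ S := Finset.mem_of_mem_erase hu
        have hR'aα : R' a α := by
          rcases hSmem u huS with h2 | h2 | h2 | h2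
          · subst h2; exact absurd hR'au (asym_irrefl hR'a _)
          · subst h2; exact absurd rfl (Finset.mem_erase.mp hu).1
          · subst h2; exact hR'au
          · subst h2; exact absurd hR'au hpr.1
        have hShort'a : Short R' S a := ⟨haS, fun hm => hm.2.2 α hαS hR'aα⟩
        have hP'ba : P' b a := cbr_pmax hC' hS hShort'a hab
        have hR'ab : R' a b := F2.2.resolve_right (fun h' => hP'a a b h' hP'ba)
        exact hpr.1 (hR't a b _ hR'ab hR'bβ)
      · have hP'βa : P' w a := hpr.2.resolve_left hR'βa
        have hMinβT : MinSet R' (S.erase b) w := by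
          by_contra h'
          exact hspT.2 w ⟨hβeb, h'⟩ hP'βa
        obtain ⟨-, ⟨u, hu, hR'uβ⟩, hsub'β⟩ := hMinβT
        have huS : u ∈ S := Finset.mem_of_mem_erase hu
        have hR'αβ : R' α w := by
          rcases hSmem u huS with h2 | h2 | h2 | h2
          · subst h2; exact absurd hR'uβ hpr.1
          · subst h2; exact absurd rfl (Finset.mem_erase.mp hu).1
          · subst h2; exact hR'uβ
          · subst h2; exact absurd hR'uβ (asym_irrefl hR'a _)
        have hMin'a : MinSet R' S a := by
          by_contra h'
          have hP'ba : P' b a := cbr_pmax hC' hS ⟨haS, h'⟩ hab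
          rcases F2.2 with h'' | h''
          · exact hpr.1 (hR't a b _ h'' hR'bβ)
          · exact hP'a a b h'' hP'ba
        have hR'αa : R' α a := by
          obtain ⟨v, hv, hR'va⟩ := hMin'a.2.1
          rcases hSmem v hv with h2 | h2 | h2 | h2
          · subst h2; exact absurd hR'va (asym_irrefl hR'a _)
          · subst h2; exact absurd (hsub'B a haS hR'va) (Ne.symm hβa)
          · subst h2; exact hR'va
          · subst h2; exact absurd hR'va hR'βa
        exact hspT.1.2 ⟨haeb, ⟨α, hαeb, hR'αa⟩,
          fun u' hu' => hMin'a.2.2 u' (Finset.mem_of_mem_erase hu')⟩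
    -- get two distinct elements of S \ {a, b} and apply KILL
    have hDsub : ({a, b} : Finset X) ⊆ S :=
      Finset.insert_subset_iff.mpr ⟨haS, Finset.singleton_subset_iff.mpr hbS⟩
    have hDcard : 1 < (S \ {a, b}).card := by
      rw [Finset.card_sdiff_of_subset hDsub, Finset.card_pair hab]; omega
    obtain ⟨x, hxD, y, hyD, hxy⟩ := Finset.one_lt_card.mp hDcard
    have hxS : x ∈ S := (Finset.mem_sdiff.mp hxD).1
    have hyS : y ∈ S := (Finset.mem_sdiff.mp hyD).1
    have hxab := (Finset.mem_sdiff.mp hxD).2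
    have hyab := (Finset.mem_sdiff.mp hyD).2
    rw [Finset.mem_insert, Finset.mem_singleton] at hxab hyab
    push_neg at hxab hyab
    obtain ⟨hxa, hxb⟩ := hxab
    obtain ⟨hya, hyb⟩ := hyab
    rcases hcl2 x hxS hxa hxb with hx1 | hx1
    · rcases hcl2 y hyS hya hyb with hy1 | hy1
      · -- both badA : unique
        obtain ⟨hRax, hsubx, -⟩ := exA hC hS hx1
        exact hxy (hsubx y hyS (exA hC hS hy1).1).symm
      · exact KILL x y hxS hyS hxa hxb hya hyb hx1 hy1
    · rcases hcl2 y hyS hya hyb with hy1 | hy1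
      · exact KILL y x hyS hxS hya hyb hxa hxb hy1 hx1
      · obtain ⟨hR'bx, hsubx, -⟩ := exA hC' hS hx1
        exact hxy (hsubx y hyS (exA hC' hS hy1).1).symm

/-- Two CBR-representable choice functions coincide on all nonempty menus iff they coincide
on all menus of cardinality at most 3. -/
theorem small_menu_identification {X : Type*} [Fintype X] [DecidableEq X]
    (C C' : Finset X → X) (hC : IsChoice C) (hC' : IsChoice C')
    (h1 : ∃ R P : X → X → Prop, CBR C R P) (h2 : ∃ R P : X → X → Prop, CBR C' R P) :
    (∀ S : Finset X, S.Nonempty → C S = C' S) ↔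
      (∀ S : Finset X, S.Nonempty → S.card ≤ 3 → C S = C' S) := by
  obtain ⟨R, P, hCR⟩ := h1
  obtain ⟨R', P', hCR'⟩ := h2
  constructor
  · exact fun h S hS _ => h S hS
  · intro hsmall
    have main : ∀ n : ℕ, ∀ S : Finset X, S.card ≤ n → S.Nonempty → C S = C' S := by
      intro n
      induction n with
      | zero =>
        intro S hc hSne
        exact absurd (Finset.card_eq_zero.mp (Nat.le_zero.mp hc))
          (Finset.nonempty_iff_ne_empty.mp hSne)
      | succ n ih =>
        intro S hc hSne
        by_cases h3 : S.card ≤ 3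
        · exact hsmall S hSne h3
        · push_neg at h3
          by_contra hne
          have hAG : ∀ T : Finset X, T.Nonempty → T.card < S.card → C T = C' T := by
            intro T hT hTc
            exact ih T (by omega) hT
          have hplt : ({C S, C' S} : Finset X).card < S.card := by
            have h4 : ({C S, C' S} : Finset X).card ≤ 2 :=
              le_trans (Finset.card_insert_le _ _) (by simp)
            omega
          have hmemp : C {C S, C' S} ∈ ({C S, C' S} : Finset X) :=
            cbr_mem hCR ⟨C S, mem_pair_left _ _⟩
          rcases Finset.mem_insert.mp hmemp with hp | hp
          · exact key C C' R P R' P' hCR hCR' S hSne hAG (by omega) hne hp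
          · rw [Finset.mem_singleton] at hp
            have hAG' : ∀ T : Finset X, T.Nonempty → T.card < S.card → C' T = C T :=
              fun T ht1 ht2 => (hAG T ht1 ht2).symm
            have hp' : C' {C' S, C S} = C' S := by
              calc C' {C' S, C S} = C' {C S, C' S} := by rw [Finset.pair_comm]
                _ = C {C S, C' S} := (hAG _ ⟨C S, mem_pair_left _ _⟩ hplt).symm
                _ = C' S := hp
            exact key C' C R' P' R P hCR' hCR S hSne hAG' (by omega) (Ne.symm hne) hp'
    exact fun S hS => main S.card S le_rfl hS
end

section
/- If a choice function C is CBR-representable, then C is RSM-representable if and only if C displays no weak reversals. -/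
/-- `(P₁, P₂)` is an RSM representation of `C`: both are rationales and for every nonempty
menu `S`, `C S` is the unique element of `max(max(S, P₁), P₂)`. -/
def RSM {X : Type*} (C : Finset X → X) (P1 P2 : X → X → Prop) : Prop :=
  Asym P1 ∧ Asym P2 ∧
    ∀ S : Finset X, S.Nonempty →
      ∀ x : X, (MaxSet P1 S x ∧ ∀ z : X, MaxSet P1 S z → ¬ P2 z x) ↔ x = C S

section AuxLemmas

variable {X : Type*} [DecidableEq X]

/-- In a CBR representation, if `R a b` then `a` is chosen from the pair `{a, b}`. -/
lemma cbr_pair {C : Finset X → X} {R P : X → X → Prop} (h : CBR C R P)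
    {a b : X} (hab : R a b) : C {a, b} = a := by
  obtain ⟨hRa, hRt, hPa, hPc, hiff⟩ := h
  have hne : ({a, b} : Finset X).Nonempty := ⟨a, by simp⟩
  refine ((hiff _ hne a).mp ?_).symm
  refine ⟨⟨by simp, ?_⟩, ?_⟩
  · rintro ⟨-, ⟨u, hu, hru⟩, -⟩
    rcases Finset.mem_insert.mp hu with hu | hu
    · subst hu; exact hRa _ _ hru hru
    · rw [Finset.mem_singleton] at hu; subst hu
      exact hRa _ _ hab hru
  · rintro w ⟨hw, hwn⟩ hPwa
    rcases Finset.mem_insert.mp hw with hw | hw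
    · subst hw; exact hPa _ _ hPwa hPwa
    · rw [Finset.mem_singleton] at hw; subst hw
      refine hwn ⟨by simp, ⟨a, by simp, hab⟩, ?_⟩
      intro u hu hbu
      rcases Finset.mem_insert.mp hu with hu | hu
      · subst hu; exact hRa _ _ hab hbu
      · rw [Finset.mem_singleton] at hu; subst hu
        exact hRa _ _ hbu hbu

/-- Key structural consequence of no weak reversals for a CBR representation:
if `R a x`, `P x a` and `R x v` then we get a contradiction. -/
lemma cbr_star {C : Finset X → X} {R P : X → X → Prop} (h : CBR C R P)
    (hnw : ¬ ∃ (x y z : X) (S : Finset X), WeakRev C x y z S)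
    {a x v : X} (h1 : R a x) (h2 : P x a) (h3 : R x v) : False := by
  have hp1 : C {a, x} = a := cbr_pair h h1
  obtain ⟨hRa, hRt, hPa, hPc, hiff⟩ := h
  have hav : R a v := hRt _ _ _ h1 h3
  have hax : a ≠ x := by rintro rfl; exact hRa _ _ h1 h1
  have hxv : x ≠ v := by rintro rfl; exact hRa _ _ h3 h3
  have hav' : a ≠ v := by rintro rfl; exact hRa _ _ hav hav
  have hp2 : C {a, v} = a := cbr_pair ⟨hRa, hRt, hPa, hPc, hiff⟩ hav
  have htri : C (insert v ({a, x} : Finset X)) = x := by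
    have hne : (insert v ({a, x} : Finset X)).Nonempty := ⟨v, Finset.mem_insert_self _ _⟩
    refine ((hiff _ hne x).mp ?_).symm
    refine ⟨⟨by simp, ?_⟩, ?_⟩
    · rintro ⟨-, -, hmin⟩
      exact hmin v (Finset.mem_insert_self _ _) h3
    · rintro w ⟨hw, hwn⟩ hPwx
      rcases Finset.mem_insert.mp hw with hw | hw
      · -- w = v
        subst hw
        refine hwn ⟨Finset.mem_insert_self _ _, ⟨x, by simp, h3⟩, ?_⟩
        intro u hu hvu
        rcases Finset.mem_insert.mp hu with hu | hu
        · subst hu; exact hRa _ _ hvu hvu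
        rcases Finset.mem_insert.mp hu with hu | hu
        · subst hu; exact hRa _ _ hav hvu
        · rw [Finset.mem_singleton] at hu; subst hu
          exact hRa _ _ h3 hvu
      rcases Finset.mem_insert.mp hw with hw | hw
      · subst hw; exact hPa _ _ h2 hPwx
      · rw [Finset.mem_singleton] at hw; subst hw
        exact hPa _ _ hPwx hPwx
  refine hnw ⟨a, x, v, {a, x}, ⟨hax, by simp, by simp, ?_, hp1, hp1, htri⟩, hav', hp2⟩
  intro hm
  rcases Finset.mem_insert.mp hm with hm | hm
  · exact hav' hm.symm
  · rw [Finset.mem_singleton] at hm; exact hxv hm.symm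

/-- Key lemma: if `z ∈ S` pairwise beats `C S`, then some element of `S` blocks `z`
from ever being chosen. -/
lemma cbr_key1 {C : Finset X → X} {R P : X → X → Prop} (h : CBR C R P)
    (hnw : ¬ ∃ (x y z : X) (S : Finset X), WeakRev C x y z S)
    {S : Finset X} {z : X} (hzS : z ∈ S) (hzc : z ≠ C S) (hpcz : C {z, C S} = z) :
    ∃ a ∈ S, ∀ T : Finset X, a ∈ T → z ∈ T → C T ≠ z := by
  obtain ⟨hRa, hRt, hPa, hPc, hiff⟩ := id h
  have hSne : S.Nonempty := ⟨z, hzS⟩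
  have hcS : Short R S (C S) ∧ ∀ w, Short R S w → ¬ P w (C S) :=
    (hiff S hSne (C S)).mpr rfl
  -- First: z is not in Short R S, hence it has a dominator in S.
  have hshortz : ¬ Short R S z := by
    intro hsz
    have hPcz : P (C S) z := (hPc z (C S) hzc).resolve_left (hcS.2 z hsz)
    have hpairfacts : Short R {z, C S} z ∧ ∀ w, Short R {z, C S} w → ¬ P w z :=
      (hiff {z, C S} ⟨z, by simp⟩ z).mpr hpcz.symm
    have hnotshortc : ¬ Short R {z, C S} (C S) := fun hs => hpairfacts.2 _ hs hPcz
    have hminc : MinSet R {z, C S} (C S) := by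
      by_contra hm
      exact hnotshortc ⟨by simp, hm⟩
    obtain ⟨-, ⟨u, hu, huc⟩, -⟩ := hminc
    have hRzc : R z (C S) := by
      rcases Finset.mem_insert.mp hu with hu | hu
      · subst hu; exact huc
      · rw [Finset.mem_singleton] at hu; subst hu
        exact absurd huc (hRa _ _ huc)
    -- C S is dominated in S but is Short, so it dominates something in S.
    obtain ⟨hcmem, hcnm⟩ := hcS.1
    have : ∃ w ∈ S, R (C S) w := by
      by_contra hno
      push_neg at hno
      exact hcnm ⟨hcmem, ⟨z, hzS, hRzc⟩, hno⟩
    obtain ⟨w, hwS, hcw⟩ := this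
    exact cbr_star h hnw hRzc hPcz hcw
  have hminz : MinSet R S z := by
    by_contra hm
    exact hshortz ⟨hzS, hm⟩
  obtain ⟨-, ⟨a, haS, haz⟩, -⟩ := hminz
  refine ⟨a, haS, ?_⟩
  intro T haT hzT hCT
  have hTfacts : Short R T z ∧ ∀ w, Short R T w → ¬ P w z :=
    (hiff T ⟨z, hzT⟩ z).mpr hCT.symm
  have haz' : a ≠ z := by rintro rfl; exact hRa _ _ haz haz
  have hshorta : Short R T a := ⟨haT, by rintro ⟨-, -, hmm⟩; exact hmm z hzT haz⟩
  have hPza : P z a := (hPc a z haz').resolve_left (hTfacts.2 a hshorta)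
  obtain ⟨-, hznm⟩ := hTfacts.1
  have : ∃ v ∈ T, R z v := by
    by_contra hno
    push_neg at hno
    exact hznm ⟨hzT, ⟨a, haT, haz⟩, hno⟩
  obtain ⟨v, hvT, hzv⟩ := this
  exact cbr_star h hnw haz hPza hzv

end AuxLemmas

/-- A CBR-representable choice function is RSM-representable iff it displays no weak
reversals. -/
theorem cbr_rsm_iff_no_weak_reversal {X : Type*} [Fintype X] [DecidableEq X]
    (C : Finset X → X) (hC : IsChoice C)
    (hrep : ∃ R P : X → X → Prop, CBR C R P) :
    (∃ P1 P2 : X → X → Prop, RSM C P1 P2) ↔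
      ¬ ∃ (x y z : X) (S : Finset X), WeakRev C x y z S := by
  obtain ⟨R, P, hR⟩ := hrep
  constructor
  · -- RSM implies no weak reversals
    rintro ⟨P1, P2, hA1, hA2, hiff⟩
    rintro ⟨x, y, z, S, ⟨hxy, hxS, hyS, hzS, hCxy, hCS, hCins⟩, hxz, hCxz⟩
    have hSne : S.Nonempty := ⟨x, hxS⟩
    have hxcond := (hiff S hSne x).mpr hCS.symm
    have hne' : (insert z S).Nonempty := ⟨x, Finset.mem_insert_of_mem hxS⟩
    have hpcond := (hiff {x, z} ⟨x, by simp⟩ x).mpr hCxz.symm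
    have hnzx : ¬ P1 z x := fun hp => (hpcond.1.2 z (by simp)) hp
    have hmaxins : MaxSet P1 (insert z S) x := by
      refine ⟨Finset.mem_insert_of_mem hxS, ?_⟩
      intro w hw hpw
      rcases Finset.mem_insert.mp hw with hw | hw
      · subst hw; exact hnzx hpw
      · exact hxcond.1.2 w hw hpw
    have hfail : ¬ ∀ w, MaxSet P1 (insert z S) w → ¬ P2 w x := by
      intro hall
      exact hxy (((hiff (insert z S) hne' x).mp ⟨hmaxins, hall⟩).trans hCins)
    push_neg at hfail
    obtain ⟨w, hwmax, hPwx⟩ := hfail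
    rcases Finset.mem_insert.mp hwmax.1 with hwz | hwS
    · -- w = z
      subst hwz
      have hnxz : ¬ P1 x w := hwmax.2 x (Finset.mem_insert_of_mem hxS)
      have hmaxpair : MaxSet P1 {x, w} w := by
        refine ⟨by simp, ?_⟩
        intro u hu hpu
        rcases Finset.mem_insert.mp hu with hu | hu
        · subst hu; exact hnxz hpu
        · rw [Finset.mem_singleton] at hu; subst hu
          exact hA1 _ _ hpu hpu
      exact hpcond.2 w hmaxpair hPwx
    · -- w ∈ S
      have hwmaxS : MaxSet P1 S w :=
        ⟨hwS, fun u hu => hwmax.2 u (Finset.mem_insert_of_mem hu)⟩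
      exact hxcond.2 w hwmaxS hPwx
  · -- no weak reversals implies RSM
    intro hnw
    refine ⟨fun a b => ∀ T : Finset X, a ∈ T → b ∈ T → C T ≠ b, pc C, ?_, ?_, ?_⟩
    · -- Asym P1
      intro a b hab hba
      by_cases hne : a = b
      · subst hne
        exact hab {a} (by simp) (by simp)
          (Finset.mem_singleton.mp (hC {a} ⟨a, by simp⟩))
      · rcases Finset.mem_insert.mp (hC {a, b} ⟨a, by simp⟩) with h1 | h1
        · exact hba {a, b} (by simp) (by simp) h1
        · rw [Finset.mem_singleton] at h1
          exact hab {a, b} (by simp) (by simp) h1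
    · -- Asym P2
      rintro a b ⟨hab, hCab⟩ ⟨hba, hCba⟩
      rw [Finset.pair_comm b a] at hCba
      exact hab (hCab.symm.trans hCba)
    · intro S hSne x
      constructor
      · rintro ⟨⟨hxS, hmax⟩, hall⟩
        by_contra hne
        have hcS : C S ∈ S := hC S hSne
        have hcmax : MaxSet (fun a b => ∀ T : Finset X, a ∈ T → b ∈ T → C T ≠ b) S (C S) :=
          ⟨hcS, fun u hu hp => hp S hu hcS rfl⟩
        have hnotpcxc : ¬ pc C x (C S) := by
          rintro ⟨hnexc, hCxc⟩
          obtain ⟨a, haS, hblk⟩ := cbr_key1 hR hnw hxS hnexc hCxc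
          exact hmax a haS hblk
        rcases Finset.mem_insert.mp (hC {x, C S} ⟨x, by simp⟩) with h1 | h1
        · exact hnotpcxc ⟨hne, h1⟩
        · rw [Finset.mem_singleton] at h1
          rw [Finset.pair_comm x (C S)] at h1
          exact hall (C S) hcmax ⟨Ne.symm hne, h1⟩
      · intro hx
        subst hx
        refine ⟨⟨hC S hSne, fun u hu hp => hp S hu (hC S hSne) rfl⟩, ?_⟩
        rintro w ⟨hwS, hwmax⟩ ⟨hwne, hCw⟩
        obtain ⟨a, haS, hblk⟩ := cbr_key1 hR hnw hwS hwne hCw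
        exact hwmax a haS hblk
end

section
/- If a choice function C is Transitive-CBR representable, then C is TSM-representable if and only if C displays no weak reversals. -/
/-- `(R, P)` is a Transitive-CBR representation: a CBR representation where
the second rationale `P` is moreover transitive (a linear order). -/
def TCBR {X : Type*} (C : Finset X → X) (R P : X → X → Prop) : Prop :=
  CBR C R P ∧ Tran P

/-- `(P₁, P₂)` is a TSM representation of `C`: both rationales are transitive and for every
nonempty menu `S`, `C S` is the unique element of `max(max(S, P₁), P₂)`. -/
def TSM {X : Type*} (C : Finset X → X) (P1 P2 : X → X → Prop) : Prop :=
  Asym P1 ∧ Tran P1 ∧ Asym P2 ∧ Tran P2 ∧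
    ∀ S : Finset X, S.Nonempty →
      ∀ x : X, (MaxSet P1 S x ∧ ∀ z : X, MaxSet P1 S z → ¬ P2 z x) ↔ x = C S

/-- A Transitive-CBR representable choice function is TSM-representable iff it displays
no weak reversals. -/
theorem tcbr_tsm_iff_no_weak_reversal {X : Type*} [Fintype X] [DecidableEq X]
    (C : Finset X → X) (hC : IsChoice C)
    (hrep : ∃ R P : X → X → Prop, TCBR C R P) :
    (∃ P1 P2 : X → X → Prop, TSM C P1 P2) ↔
      ¬ ∃ (x y z : X) (S : Finset X), WeakRev C x y z S := by
  obtain ⟨R, P, ⟨⟨hRA, hRT, hPA, hPC, hrep⟩, hPT⟩⟩ := hrep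
  constructor
  · rintro ⟨P1, P2, hA1, hT1, hA2, hT2, htsm⟩
    rintro ⟨x, y, z, S, ⟨⟨hxy, hxS, hyS, hzS, hpair, hCS, hCins⟩, hxz, hpc⟩⟩
    have hSne : S.Nonempty := ⟨x, hxS⟩
    have hpairne : ({x, z} : Finset X).Nonempty := ⟨x, by simp⟩
    have hinsne : (insert z S).Nonempty := ⟨z, Finset.mem_insert_self _ _⟩
    have hxprops := (htsm S hSne x).mpr hCS.symm
    have hpairprops := (htsm {x, z} hpairne x).mpr hpc.symm
    have hzP1x : ¬ P1 z x := hpairprops.1.2 z (by simp)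
    have hxmaxins : MaxSet P1 (insert z S) x := by
      refine ⟨Finset.mem_insert_of_mem hxS, ?_⟩
      intro w hw
      rcases Finset.mem_insert.mp hw with h | h
      · subst h; exact hzP1x
      · exact hxprops.1.2 w h
    have hxneC : x ≠ C (insert z S) := by rw [hCins]; exact hxy
    have hcon : ¬ (MaxSet P1 (insert z S) x ∧
        ∀ w : X, MaxSet P1 (insert z S) w → ¬ P2 w x) := by
      intro h; exact hxneC ((htsm (insert z S) hinsne x).mp h)
    push_neg at hcon
    obtain ⟨w, hwmax, hwP2x⟩ := hcon hxmaxins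
    rcases Finset.mem_insert.mp hwmax.1 with h | h
    · subst h
      have hxP1z : ¬ P1 x w := hwmax.2 x (Finset.mem_insert_of_mem hxS)
      have hzmaxpair : MaxSet P1 {x, w} w := by
        refine ⟨by simp, ?_⟩
        intro u hu
        rcases Finset.mem_insert.mp hu with h | h
        · subst h; exact hxP1z
        · have : u = w := Finset.mem_singleton.mp h
          subst this; exact fun hp => hA1 u u hp hp
      exact hpairprops.2 w hzmaxpair hwP2x
    · have : MaxSet P1 S w := ⟨h, fun u hu => hwmax.2 u (Finset.mem_insert_of_mem hu)⟩
      exact hxprops.2 w this hwP2x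
  · intro hno
    have hmax : ∀ S : Finset X, S.Nonempty → ∀ z ∈ S, ¬ R z (C S) := by
      intro S hS z hzS hzc
      have hcprops := (hrep S hS (C S)).mpr rfl
      set c := C S with hc
      have hcS : c ∈ S := hcprops.1.1
      have hzcne : z ≠ c := by intro h; rw [h] at hzc; exact hRA c c hzc hzc
      have hd : ∃ d ∈ S, R c d := by
        by_contra hcon
        push_neg at hcon
        exact hcprops.1.2 ⟨hcS, ⟨z, hzS, hzc⟩, hcon⟩
      obtain ⟨d, hdS, hcd⟩ := hd
      have hdc : d ≠ c := by intro h; rw [h] at hcd; exact hRA c c hcd hcd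
      have hdz : d ≠ z := by intro h; rw [h] at hcd; exact hRA z c hzc hcd
      have hzd : R z d := hRT z c d hzc hcd
      have hshortz : Short R S z := ⟨hzS, fun hmin => hmin.2.2 c hcS hzc⟩
      have hPcz : P c z := by
        rcases hPC c z (Ne.symm hzcne) with h | h
        · exact h
        · exact absurd h (hcprops.2 z hshortz)
      have hCzc : C ({z, c} : Finset X) = z := by
        refine ((hrep {z, c} ⟨z, by simp⟩ z).mp ?_).symm
        constructor
        · exact ⟨by simp, fun hmin => hmin.2.2 c (by simp) hzc⟩
        · intro w hw
          rcases Finset.mem_insert.mp hw.1 with h | h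
          · rw [h]; exact fun hp => hPA z z hp hp
          · exfalso
            apply hw.2
            rw [Finset.mem_singleton.mp h]
            refine ⟨by simp, ⟨z, by simp, hzc⟩, ?_⟩
            intro u hu
            rcases Finset.mem_insert.mp hu with h' | h'
            · rw [h']; exact hRA z c hzc
            · rw [Finset.mem_singleton.mp h']; exact fun hp => hRA c c hp hp
      have hCzd : C ({z, d} : Finset X) = z := by
        refine ((hrep {z, d} ⟨z, by simp⟩ z).mp ?_).symm
        constructor
        · exact ⟨by simp, fun hmin => hmin.2.2 d (by simp) hzd⟩
        · intro w hw
          rcases Finset.mem_insert.mp hw.1 with h | h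
          · rw [h]; exact fun hp => hPA z z hp hp
          · exfalso
            apply hw.2
            rw [Finset.mem_singleton.mp h]
            refine ⟨by simp, ⟨z, by simp, hzd⟩, ?_⟩
            intro u hu
            rcases Finset.mem_insert.mp hu with h' | h'
            · rw [h']; exact hRA z d hzd
            · rw [Finset.mem_singleton.mp h']; exact fun hp => hRA d d hp hp
      have hCT : C (insert d ({z, c} : Finset X)) = c := by
        refine ((hrep _ ⟨z, by simp⟩ c).mp ?_).symm
        constructor
        · exact ⟨by simp, fun hmin => hmin.2.2 d (by simp) hcd⟩
        · intro w hw
          have hwmem : w = d ∨ w = z ∨ w = c := by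
            have h := hw.1
            simp only [Finset.mem_insert, Finset.mem_singleton] at h
            tauto
          rcases hwmem with h | h | h
          · exfalso
            apply hw.2
            rw [h]
            refine ⟨by simp, ⟨z, by simp, hzd⟩, ?_⟩
            intro u hu
            simp only [Finset.mem_insert, Finset.mem_singleton] at hu
            rcases hu with h' | h' | h'
            · rw [h']; exact fun hp => hRA d d hp hp
            · rw [h']; exact hRA z d hzd
            · rw [h']; exact hRA c d hcd
          · rw [h]; exact fun hp => hPA c z hPcz hp
          · rw [h]; exact fun hp => hPA c c hp hp
      refine hno ⟨z, c, d, {z, c}, ⟨⟨hzcne, by simp, by simp, ?_, hCzc, hCzc, hCT⟩,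
        Ne.symm hdz, hCzd⟩⟩
      simp [hdz, hdc]
    refine ⟨R, P, hRA, hRT, hPA, hPT, ?_⟩
    intro S hS x
    constructor
    · rintro ⟨hmx, hnb⟩
      by_contra hne
      have hcmax : MaxSet R S (C S) := ⟨hC S hS, fun w hw => hmax S hS w hw⟩
      have h1 : ¬ P (C S) x := hnb (C S) hcmax
      have hxshort : Short R S x := ⟨hmx.1, fun hmin =>
        let ⟨w, hwS, hwx⟩ := hmin.2.1; hmx.2 w hwS hwx⟩
      have h2 : ¬ P x (C S) := ((hrep S hS (C S)).mpr rfl).2 x hxshort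
      rcases hPC x (C S) hne with h | h
      · exact h2 h
      · exact h1 h
    · rintro rfl
      refine ⟨⟨hC S hS, fun w hw => hmax S hS w hw⟩, ?_⟩
      intro w hw
      have hws : Short R S w := ⟨hw.1, fun hmin =>
        let ⟨u, huS, hu⟩ := hmin.2.1; hw.2 u huS hu⟩
      exact ((hrep S hS (C S)).mpr rfl).2 w hws
end

section
/- Let (R, P) be a CBR representation of a choice function C. Then for all x, y ∈ X, x ≻_R y implies x R y. -/
section Aux
variable {X : Type*} [DecidableEq X]

lemma short_of_dom {R : X → X → Prop} {S : Finset X} {x v : X}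
    (hx : x ∈ S) (hv : v ∈ S) (h : R x v) : Short R S x :=
  ⟨hx, fun hmin => hmin.2.2 v hv h⟩

lemma min_of_not_short {R : X → X → Prop} {S : Finset X} {x : X}
    (hx : x ∈ S) (h : ¬ Short R S x) : MinSet R S x := by
  by_contra hm; exact h ⟨hx, hm⟩

lemma chosen_facts {C : Finset X → X} {R P : X → X → Prop} (hrep : CBR C R P)
    {S : Finset X} (hS : S.Nonempty) :
    Short R S (C S) ∧ ∀ z, Short R S z → ¬ P z (C S) :=
  (hrep.2.2.2.2 S hS (C S)).mpr rfl

lemma pair_facts {C : Finset X → X} {R P : X → X → Prop} (hrep : CBR C R P)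
    {x y : X} (hxy : x ≠ y) (h : C {x, y} = x) : ¬ R y x ∧ (R x y ∨ P x y) := by
  obtain ⟨hRa, hRt, hPa, hPc, hiff⟩ := hrep
  have hne : ({x, y} : Finset X).Nonempty := ⟨x, by simp⟩
  have hx := (hiff _ hne x).mpr h.symm
  have hnyx : ¬ R y x := by
    intro hyx
    exact hx.1.2 ⟨by simp, ⟨y, by simp, hyx⟩, by
      intro z hz
      rcases Finset.mem_insert.mp hz with rfl | hz
      · exact fun h' => hRa z z h' h'
      · have hzy : z = y := by simpa using hz
        rw [hzy]
        exact hRa y x hyx⟩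
  refine ⟨hnyx, ?_⟩
  by_cases hxy' : R x y
  · exact Or.inl hxy'
  · have hys : Short R {x, y} y := by
      refine ⟨by simp, fun hmin => ?_⟩
      obtain ⟨_, ⟨z, hz, hzy⟩, _⟩ := hmin
      rcases Finset.mem_insert.mp hz with rfl | hz
      · exact hxy' hzy
      · have hzy' : z = y := by simpa using hz
        rw [hzy'] at hzy
        exact hRa y y hzy hzy
    have hnpyx : ¬ P y x := hx.2 y hys
    rcases hPc x y hxy with hp | hp
    · exact Or.inr hp
    · exact absurd hp hnpyx

end Aux

/-- Let `(R, P)` be a CBR representation of `C`. Then the revealed relation `≻_R` is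
contained in `R`. -/
theorem revealed_relation_subset {X : Type*} [Fintype X] [DecidableEq X]
    (C : Finset X → X) (hC : IsChoice C)
    (R P : X → X → Prop) (hrep : CBR C R P) :
    ∀ x y : X, RRel C x y → R x y := by
  obtain ⟨hRa, hRt, hPa, hPc, hiff⟩ := hrep
  have hrep' : CBR C R P := ⟨hRa, hRt, hPa, hPc, hiff⟩
  intro x y h
  rcases h with ⟨w, S, ⟨⟨hxy, hxS, hyS, hwS, hp, hCS, hCT⟩, hxw, hCxw⟩⟩ |
    ⟨w, S, ⟨⟨hwx, hwS, hxS, hyS, hp, hCS, hCT⟩, hwy, hCwy⟩⟩ |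
    ⟨w, S, ⟨⟨hyw, hyS, hwS, hxS, hp, hCS, hCT⟩, hxy, hCxy⟩⟩
  · -- Case 1: weak (x y) reversal due to w on S
    obtain ⟨hnyx, hor⟩ := pair_facts hrep' hxy hp
    rcases hor with hxy' | hPxy
    · exact hxy'
    · exfalso
      set T := insert w S with hT
      have hTne : T.Nonempty := ⟨x, Finset.mem_insert_of_mem hxS⟩
      have hch := chosen_facts hrep' hTne
      rw [hCT] at hch
      obtain ⟨hTy, hTmax⟩ := hch
      -- x is not short in T
      have hnsx : ¬ Short R T x := fun hs => hTmax x hs hPxy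
      obtain ⟨_, ⟨u, huT, hux⟩, hnod⟩ :=
        min_of_not_short (Finset.mem_insert_of_mem hxS) hnsx
      have hchS := chosen_facts hrep' ⟨x, hxS⟩
      rw [hCS] at hchS
      obtain ⟨hSx, _⟩ := hchS
      rcases Finset.mem_insert.mp huT with rfl | huS
      · exact (pair_facts hrep' hxw hCxw).1 hux
      · exact hSx.2 ⟨hxS, ⟨u, huS, hux⟩, fun v hv => hnod v (Finset.mem_insert_of_mem hv)⟩
  · -- Case 2: weak (w x) reversal due to y on S
    obtain ⟨hnxw, hor1⟩ := pair_facts hrep' hwx hp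
    obtain ⟨hnyw, _⟩ := pair_facts hrep' hwy hCwy
    set T := insert y S with hT
    have hTne : T.Nonempty := ⟨x, Finset.mem_insert_of_mem hxS⟩
    have hch := chosen_facts hrep' hTne
    rw [hCT] at hch
    obtain ⟨hTx, hTmax⟩ := hch
    have hchS := chosen_facts hrep' ⟨w, hwS⟩
    rw [hCS] at hchS
    obtain ⟨hSw, hSmax⟩ := hchS
    -- w is short in T
    have hTw : Short R T w := by
      by_contra hns
      obtain ⟨_, ⟨u, huT, huw⟩, hnod⟩ :=
        min_of_not_short (Finset.mem_insert_of_mem hwS) hns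
      rcases Finset.mem_insert.mp huT with rfl | huS
      · exact hnyw huw
      · exact hSw.2 ⟨hwS, ⟨u, huS, huw⟩, fun v hv => hnod v (Finset.mem_insert_of_mem hv)⟩
    have hnPwx : ¬ P w x := hTmax w hTw
    have hRwx : R w x := by
      rcases hor1 with h' | h'
      · exact h'
      · exact absurd h' hnPwx
    -- x short in T and dominated, hence dominates someone in T
    have hex : ∃ v ∈ T, R x v := by
      by_contra hne
      push_neg at hne
      exact hTx.2 ⟨hTx.1, ⟨w, Finset.mem_insert_of_mem hwS, hRwx⟩, hne⟩
    obtain ⟨v, hvT, hxv⟩ := hex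
    rcases Finset.mem_insert.mp hvT with rfl | hvS
    · exact hxv
    · exfalso
      have hSx : Short R S x := short_of_dom hxS hvS hxv
      have hnPxw : ¬ P x w := hSmax x hSx
      rcases hPc w x hwx with h' | h'
      · exact hnPwx h'
      · exact hnPxw h'
  · -- Case 3: strong (y w) reversal due to x on S
    obtain ⟨hnyx, hor⟩ := pair_facts hrep' hxy hCxy
    rcases hor with hxy' | hPxy
    · exact hxy'
    · obtain ⟨hnwy, hor2⟩ := pair_facts hrep' hyw hp
      set T := insert x S with hT
      have hTne : T.Nonempty := ⟨y, Finset.mem_insert_of_mem hyS⟩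
      have hch := chosen_facts hrep' hTne
      rw [hCT] at hch
      obtain ⟨hTw, hTmax⟩ := hch
      have hchS := chosen_facts hrep' ⟨y, hyS⟩
      rw [hCS] at hchS
      obtain ⟨hSy, hSmax⟩ := hchS
      by_cases hTy : Short R T y
      · exfalso
        have hnPyw : ¬ P y w := hTmax y hTy
        have hRyw : R y w := by
          rcases hor2 with h' | h'
          · exact h'
          · exact absurd h' hnPyw
        -- w is short in T and dominated by y, so it dominates someone in T
        have hex : ∃ v ∈ T, R w v := by
          by_contra hne
          push_neg at hne
          exact hTw.2 ⟨hTw.1, ⟨y, Finset.mem_insert_of_mem hyS, hRyw⟩, hne⟩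
        obtain ⟨v, hvT, hwv⟩ := hex
        rcases Finset.mem_insert.mp hvT with rfl | hvS
        · exact hnyx (hRt y w v hRyw hwv)
        · have hSw : Short R S w := short_of_dom hwS hvS hwv
          have hnPwy : ¬ P w y := hSmax w hSw
          rcases hPc y w hyw with h' | h'
          · exact hnPyw h'
          · exact hnPwy h'
      · obtain ⟨_, ⟨u, huT, huy⟩, hnod⟩ :=
          min_of_not_short (Finset.mem_insert_of_mem hyS) hTy
        rcases Finset.mem_insert.mp huT with rfl | huS
        · exact huy
        · exact absurd ⟨hyS, ⟨u, huS, huy⟩,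
            fun v hv => hnod v (Finset.mem_insert_of_mem hv)⟩ hSy.2
end
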